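/- arXiv:2109.06338 — 11 statements merged into one kernel-verified Lean document; each statement's English description precedes it below -/
import Mathlib

section
/- Let X be an infinite Tychonoff space, E a Banach space, and T: C_p(X) → E a linear operator that is sequentially continuous from the topology of pointwise convergence to the weak topology of E. Then for every sequence (U_n) of pairwise disjoint nonempty open subsets of X there exists N such that T(f) = 0 for all n ≥ N and all continuous f: X → ℝ with support contained in U_n. -/
/-!
Suppose not. Then there are functions `f N` supported in `U (n N)` with `n N ≥ N` and
`T (f N) ≠ 0`; rescale them so that `‖T (f N)‖ = N`. Since the `U m` are pairwise disjoint and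
`n N → ∞`, every point of `X` eventually leaves the supports, so `f N → 0` pointwise. By
sequential continuity `T (f N) → 0` weakly, and a weakly convergent sequence is norm bounded by
the uniform boundedness principle applied in the bidual — contradicting `‖T (f N)‖ = N`.
-/

open Filter Topology

section WeaklyBounded

variable {𝕜 E ι : Type*} [RCLike 𝕜] [SeminormedAddCommGroup E] [NormedSpace 𝕜 E]

theorem exists_norm_le_of_forall_exists_norm_dual_le {x : ι → E}
    (h : ∀ φ : StrongDual 𝕜 E, ∃ C, ∀ i, ‖φ (x i)‖ ≤ C) : ∃ C, ∀ i, ‖x i‖ ≤ C := by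
  obtain ⟨C, hC⟩ := banach_steinhaus
    (g := fun i => (NormedSpace.inclusionInDoubleDualLi 𝕜 (x i) : StrongDual 𝕜 E →L[𝕜] 𝕜)) h
  exact ⟨C, fun i => (NormedSpace.inclusionInDoubleDualLi 𝕜).norm_map (x i) ▸ hC i⟩

theorem exists_norm_le_of_tendsto_dual {x : ℕ → E} {y : E}
    (h : ∀ φ : StrongDual 𝕜 E, Tendsto (fun n => φ (x n)) atTop (𝓝 (φ y))) :
    ∃ C, ∀ n, ‖x n‖ ≤ C :=
  exists_norm_le_of_forall_exists_norm_dual_le (𝕜 := 𝕜) fun φ =>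
    let ⟨C, hC⟩ := (h φ).norm.bddAbove_range
    ⟨C, fun n => hC ⟨n, rfl⟩⟩

end WeaklyBounded

section DisjointSupports

variable {α β ι M : Type*} {U : ι → Set α} {n : β → ι} {l : Filter β}

theorem Pairwise.eventually_notMem_of_tendsto_cofinite (hU : Pairwise (Function.onFun Disjoint U))
    (hn : Tendsto n l cofinite) (x : α) : ∀ᶠ b in l, x ∉ U (n b) := by
  by_cases hx : ∃ m, x ∈ U m
  · obtain ⟨m, hxm⟩ := hx
    filter_upwards [hn.eventually (eventually_cofinite_ne m)] with b hb hxb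
    exact Set.disjoint_left.mp (hU hb) hxb hxm
  · exact Eventually.of_forall fun b hxb => hx ⟨n b, hxb⟩

theorem Pairwise.tendsto_zero_of_support_subset [Zero M] [TopologicalSpace M]
    (hU : Pairwise (Function.onFun Disjoint U)) (hn : Tendsto n l cofinite)
    {f : β → α → M} (hf : ∀ b, Function.support (f b) ⊆ U (n b)) (x : α) :
    Tendsto (fun b => f b x) l (𝓝 0) := by
  refine tendsto_const_nhds.congr' ?_
  filter_upwards [hU.eventually_notMem_of_tendsto_cofinite hn x] with b hxb
  exact (Function.notMem_support.mp fun hx => hxb (hf b hx)).symm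

end DisjointSupports

theorem stmt0_general {X : Type*} [TopologicalSpace X]
    {E : Type*} [NormedAddCommGroup E] [NormedSpace ℝ E]
    (T : C(X, ℝ) →ₗ[ℝ] E)
    (hT : ∀ (f : ℕ → C(X, ℝ)) (g : C(X, ℝ)),
      (∀ x, Tendsto (fun n => f n x) atTop (𝓝 (g x))) →
      ∀ φ : E →L[ℝ] ℝ, Tendsto (fun n => φ (T (f n))) atTop (𝓝 (φ (T g))))
    (U : ℕ → Set X)
    (hUdisj : Pairwise (Function.onFun Disjoint U)) :
    ∃ N : ℕ, ∀ n ≥ N, ∀ f : C(X, ℝ), Function.support f ⊆ U n → T f = 0 := by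
  by_contra! h
  choose n hn f hfU hTf using h
  set F : ℕ → C(X, ℝ) := fun N => (N / ‖T (f N)‖) • f N
  have hFU : ∀ N, Function.support (F N) ⊆ U (n N) :=
    fun N => (Function.support_const_smul_subset _ (f N)).trans (hfU N)
  have hnorm : ∀ N, ‖T (F N)‖ = N := fun N => by
    simp [F, norm_smul, norm_ne_zero_iff.mpr (hTf N)]
  have hn_cofinite : Tendsto n atTop cofinite :=
    Nat.cofinite_eq_atTop ▸ tendsto_atTop_mono hn tendsto_id
  obtain ⟨C, hC⟩ := exists_norm_le_of_tendsto_dual (𝕜 := ℝ) <|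
    hT F 0 (hUdisj.tendsto_zero_of_support_subset hn_cofinite hFU)
  obtain ⟨N, hN⟩ := exists_nat_gt C
  exact (hN.trans_le (hnorm N ▸ hC N)).false

theorem stmt0 {X : Type*} [TopologicalSpace X] [T35Space X] [Infinite X]
    {E : Type*} [NormedAddCommGroup E] [NormedSpace ℝ E] [CompleteSpace E]
    (T : C(X, ℝ) →ₗ[ℝ] E)
    (hT : ∀ (f : ℕ → C(X, ℝ)) (g : C(X, ℝ)),
      (∀ x, Tendsto (fun n => f n x) atTop (𝓝 (g x))) →
      ∀ φ : E →L[ℝ] ℝ, Tendsto (fun n => φ (T (f n))) atTop (𝓝 (φ (T g))))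
    (U : ℕ → Set X) (hUopen : ∀ n, IsOpen (U n)) (hUne : ∀ n, (U n).Nonempty)
    (hUdisj : Pairwise (Function.onFun Disjoint U)) :
    ∃ N : ℕ, ∀ n ≥ N, ∀ f : C(X, ℝ), Function.support f ⊆ U n → T f = 0 :=
  stmt0_general T hT U hUdisj
end

section
/- Let X be a compact Hausdorff space and E a Banach space. Suppose T: C(X) → E is a linear operator, sequentially continuous from the topology of pointwise convergence to the weak topology of E, such that every point t ∈ X has an open neighborhood U with T(f) = 0 for all continuous f supported in U. Then T = 0. -/
/-!
Cover `X` by the open sets on which `T` vanishes and take a partition of unity `p i` subordinate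
to this cover. By compactness only finitely many `p i` are nonzero, so every `f` is the finite
sum of the `p i * f`, and each of these is supported inside a member of the cover.
-/

open Filter Topology Set

section

variable {X : Type*} [TopologicalSpace X] [CompactSpace X]

theorem PartitionOfUnity.exists_finset_sum_eq_one {ι : Type*} (p : PartitionOfUnity ι X univ) :
    ∃ s : Finset ι, ∑ i ∈ s, (p i : C(X, ℝ)) = 1 := by
  have hfin : {i | (Function.support (p i)).Nonempty}.Finite :=
    p.locallyFinite.finite_nonempty_of_compact
  refine ⟨hfin.toFinset, ContinuousMap.ext fun x => ?_⟩
  rw [ContinuousMap.coe_sum, Finset.sum_apply, ContinuousMap.one_apply,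
    ← p.sum_eq_one (mem_univ x)]
  refine (finsum_eq_finsetSum_of_support_subset _ fun i hi => ?_).symm
  exact hfin.mem_toFinset.2 ⟨x, hi⟩

theorem LinearMap.eq_zero_of_forall_support_subset [T2Space X] {ι M : Type*} [AddCommMonoid M]
    [Module ℝ M] (T : C(X, ℝ) →ₗ[ℝ] M) (U : ι → Set X) (hUo : ∀ i, IsOpen (U i))
    (hU : univ ⊆ ⋃ i, U i) (hT : ∀ i (f : C(X, ℝ)), Function.support f ⊆ U i → T f = 0) :
    T = 0 := by
  obtain ⟨p, hp⟩ := PartitionOfUnity.exists_isSubordinate isClosed_univ U hUo hU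
  obtain ⟨s, hs⟩ := p.exists_finset_sum_eq_one
  ext f
  have hpf : ∀ i, T ((p i : C(X, ℝ)) * f) = 0 := fun i =>
    hT i _ <| (Function.support_mul_subset_left (p i) f).trans <| (subset_tsupport _).trans (hp i)
  calc T f = T ((∑ i ∈ s, (p i : C(X, ℝ))) * f) := by rw [hs, one_mul]
    _ = 0 := by rw [Finset.sum_mul, map_sum]; exact Finset.sum_eq_zero fun i _ => hpf i
end

theorem stmt1_general {X : Type*} [TopologicalSpace X] [CompactSpace X] [T2Space X]
    {E : Type*} [NormedAddCommGroup E] [NormedSpace ℝ E]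
    (T : C(X, ℝ) →ₗ[ℝ] E)
    (hloc : ∀ t : X, ∃ U : Set X, IsOpen U ∧ t ∈ U ∧
      ∀ f : C(X, ℝ), Function.support f ⊆ U → T f = 0) :
    T = 0 := by
  choose U hUo hUt hU0 using hloc
  exact T.eq_zero_of_forall_support_subset U hUo (fun t _ => mem_iUnion.2 ⟨t, hUt t⟩) hU0

theorem stmt1 {X : Type*} [TopologicalSpace X] [CompactSpace X] [T2Space X]
    {E : Type*} [NormedAddCommGroup E] [NormedSpace ℝ E] [CompleteSpace E]
    (T : C(X, ℝ) →ₗ[ℝ] E)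
    (hT : ∀ (f : ℕ → C(X, ℝ)) (g : C(X, ℝ)),
      (∀ x, Tendsto (fun n => f n x) atTop (𝓝 (g x))) →
      ∀ φ : E →L[ℝ] ℝ, Tendsto (fun n => φ (T (f n))) atTop (𝓝 (φ (T g))))
    (hloc : ∀ t : X, ∃ U : Set X, IsOpen U ∧ t ∈ U ∧
      ∀ f : C(X, ℝ), Function.support f ⊆ U → T f = 0) :
    T = 0 :=
  stmt1_general T hloc
end

section
/- Let X be any Tychonoff space and E a Banach space. Then every linear operator T: C_p(X) → E_w that is sequentially continuous has finite-dimensional range. -/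
/-!
Call the support of `T` the complement of the union of the open sets `U` on which `T` vanishes,
i.e. such that `T` kills every function vanishing off `U`. Among infinitely many pairwise disjoint
sets, `T` vanishes on one: otherwise rescaled functions supported in them would form a pointwise
null sequence whose images have norms `n`, whereas weakly null sequences are bounded by
Banach–Steinhaus. In a metric space this makes the support finite, and in a perfectly normal
second countable space `T` kills every function vanishing on the support, since such a function
is a pointwise limit of finite sums of functions each vanishing off an open set on which `T`
vanishes. So on `C(ℝ^ℕ)` such an operator has finite rank.
For general `X`, composing `T` with `x ↦ (fₙ x)ₙ : X → ℝ^ℕ` gives an operator on `C(ℝ^ℕ)` whose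
range contains every `T fₙ`, so no sequence `T fₙ` is linearly independent.
-/

open Filter Function Topology Metric Set

theorem Submodule.exists_linearIndependent_nat_mem {K V : Type*} [DivisionRing K]
    [AddCommGroup V] [Module K V] {p : Submodule K V} (hp : ¬ FiniteDimensional K p) :
    ∃ v : ℕ → V, LinearIndependent K v ∧ ∀ n, v n ∈ p := by
  let b := Module.Basis.ofVectorSpace K p
  have : Infinite (Module.Basis.ofVectorSpaceIndex K p) :=
    not_finite_iff_infinite.1 fun _ => hp (Module.Finite.of_basis b)
  let e := Infinite.natEmbedding (Module.Basis.ofVectorSpaceIndex K p)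
  exact ⟨fun n => b (e n), (b.linearIndependent.comp e e.injective).map' p.subtype p.ker_subtype,
    fun n => (b (e n)).2⟩

theorem LinearMap.finiteDimensional_range_of_ker_le {K V W F : Type*} [Field K]
    [AddCommGroup V] [Module K V] [AddCommGroup W] [Module K W] [FiniteDimensional K W]
    [AddCommGroup F] [Module K F] (Λ : V →ₗ[K] W) {T : V →ₗ[K] F} (h : ker Λ ≤ ker T) :
    FiniteDimensional K (range T) := by
  have : FiniteDimensional K (V ⧸ ker Λ) := Λ.quotKerEquivRange.symm.finiteDimensional
  rw [← Submodule.range_liftQ _ T h]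
  exact LinearMap.finiteDimensional_range _

theorem exists_norm_le_of_forall_dual_tendsto_zero {E : Type*} [NormedAddCommGroup E]
    [NormedSpace ℝ E] {y : ℕ → E}
    (h : ∀ φ : StrongDual ℝ E, Tendsto (fun n => φ (y n)) atTop (𝓝 0)) :
    ∃ C, ∀ n, ‖y n‖ ≤ C := by
  obtain ⟨C, hC⟩ := banach_steinhaus (g := fun n => NormedSpace.inclusionInDoubleDual ℝ E (y n))
    fun φ => by
      obtain ⟨C, hC⟩ := (h φ).norm.bddAbove_range
      exact ⟨C, fun n => hC ⟨n, rfl⟩⟩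
  exact ⟨C, fun n => (NormedSpace.inclusionInDoubleDualLi ℝ).norm_map (y n) ▸ hC n⟩

section

variable {X Y E : Type*} [TopologicalSpace X] [TopologicalSpace Y]
  [NormedAddCommGroup E] [NormedSpace ℝ E]

/-- Sequential continuity of `T : C_p(X) → E_w`. -/
def SeqContinuousPointwiseWeak (T : C(X, ℝ) →ₗ[ℝ] E) : Prop :=
  ∀ (f : ℕ → C(X, ℝ)) (g : C(X, ℝ)), (∀ x, Tendsto (fun n => f n x) atTop (𝓝 (g x))) →
    ∀ φ : E →L[ℝ] ℝ, Tendsto (fun n => φ (T (f n))) atTop (𝓝 (φ (T g)))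

def NullOn (T : C(X, ℝ) →ₗ[ℝ] E) (U : Set X) : Prop :=
  ∀ g : C(X, ℝ), (∀ x ∉ U, g x = 0) → T g = 0

def opSupport (T : C(X, ℝ) →ₗ[ℝ] E) : Set X :=
  (⋃₀ {U | IsOpen U ∧ NullOn T U})ᶜ

theorem NullOn.mono {T : C(X, ℝ) →ₗ[ℝ] E} {U V : Set X} (hV : NullOn T V) (h : U ⊆ V) :
    NullOn T U :=
  fun g hg => hV g fun x hx => hg x fun hU => hx (h hU)

namespace SeqContinuousPointwiseWeak

variable {T : C(X, ℝ) →ₗ[ℝ] E}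

theorem comp_compRight (hT : SeqContinuousPointwiseWeak T) (Φ : C(X, Y)) :
    SeqContinuousPointwiseWeak (T ∘ₗ (ContinuousMap.compRightAlgHom ℝ ℝ Φ).toLinearMap) :=
  fun f g hfg => hT (fun n => (f n).comp Φ) (g.comp Φ) fun x => hfg (Φ x)

theorem map_eq_zero_of_tendsto (hT : SeqContinuousPointwiseWeak T) {f : ℕ → C(X, ℝ)}
    {g : C(X, ℝ)} (hfg : ∀ x, Tendsto (fun n => f n x) atTop (𝓝 (g x)))
    (hf : ∀ n, T (f n) = 0) : T g = 0 :=
  SeparatingDual.eq_zero_of_forall_dual_eq_zero fun φ =>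
    tendsto_nhds_unique (hT f g hfg φ) (by simp [hf])

theorem exists_nullOn_of_pairwise_disjoint (hT : SeqContinuousPointwiseWeak T) {U : ℕ → Set X}
    (hU : Pairwise (Disjoint on U)) : ∃ n, NullOn T (U n) := by
  by_contra! hU_null
  simp only [NullOn, not_forall] at hU_null
  choose g hg_off hg using hU_null
  set h : ℕ → C(X, ℝ) := fun n => ((n : ℝ) / ‖T (g n)‖) • g n
  have h_norm : ∀ n, ‖T (h n)‖ = n := fun n => by
    have : ‖T (g n)‖ ≠ 0 := norm_ne_zero_iff.2 (hg n)
    simp [h, norm_smul, this]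
  -- each point lies in at most one `U m`, so `h n x = 0` for all large `n`
  have h_null : ∀ x, Tendsto (fun n => h n x) atTop (𝓝 ((0 : C(X, ℝ)) x)) := fun x => by
    refine tendsto_const_nhds.congr' (EventuallyEq.symm ?_)
    by_cases hx : ∃ m, x ∈ U m
    · obtain ⟨m, hm⟩ := hx
      filter_upwards [eventually_ne_atTop m] with n hn
      simp [h, hg_off n x (disjoint_left.1 (hU hn.symm) hm)]
    · simp only [not_exists] at hx
      filter_upwards with n
      simp [h, hg_off n x (hx n)]
  obtain ⟨C, hC⟩ := exists_norm_le_of_forall_dual_tendsto_zero (y := fun n => T (h n))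
    fun φ => by simpa using hT h 0 h_null φ
  obtain ⟨n, hn⟩ := exists_nat_gt C
  exact (hC n).not_gt (h_norm n ▸ hn)

theorem map_eq_zero_of_forall_exists_eq_one (hT : SeqContinuousPointwiseWeak T) {ι : Type*}
    [Countable ι] {u : ι → C(X, ℝ)} (hu : ∀ i, NullOn T (support (u i))) {g : C(X, ℝ)}
    (hg : ∀ x, g x ≠ 0 → ∃ i, u i x = 1) : T g = 0 := by
  rcases isEmpty_or_nonempty ι with hι | hι
  · have : g = 0 := ContinuousMap.ext fun x => not_not.1 fun hx => isEmptyElim (hg x hx).choose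
    rw [this, map_zero]
  obtain ⟨e, he⟩ := exists_surjective_nat ι
  -- `g * (1 - P N) = ∑ j < N, g * u (e j) * ∏ k < j, (1 - u (e k))` is killed by `T`
  set P : ℕ → C(X, ℝ) := fun N => ∏ j ∈ Finset.range N, (1 - u (e j))
  have hP : ∀ N, T (g * (1 - P N)) = 0 := by
    intro N
    induction N with
    | zero => simp [P]
    | succ N ih =>
      have hsplit : g * (1 - P (N + 1)) = g * (1 - P N) + g * P N * u (e N) := by
        simp only [P, Finset.prod_range_succ]
        ring
      rw [hsplit, map_add, ih, zero_add]
      exact hu (e N) _ fun x hx => by simp [notMem_support.1 hx]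
  refine hT.map_eq_zero_of_tendsto (fun x => ?_) hP
  refine tendsto_const_nhds.congr' (EventuallyEq.symm ?_)
  by_cases hx : g x = 0
  · filter_upwards with N
    simp [hx]
  obtain ⟨i, hi⟩ := hg x hx
  obtain ⟨j, rfl⟩ := he i
  filter_upwards [eventually_gt_atTop j] with N hN
  have : P N x = 0 := by
    simp only [P, ContinuousMap.prod_apply]
    exact Finset.prod_eq_zero (Finset.mem_range.2 hN) (by simp [hi])
  simp [this]

theorem nullOn_iUnion [PerfectlyNormalSpace X] (hT : SeqContinuousPointwiseWeak T) {ι : Type*}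
    [Countable ι] {U : ι → Set X} (hU_open : ∀ i, IsOpen (U i)) (hU : ∀ i, NullOn T (U i)) :
    NullOn T (⋃ i, U i) := by
  intro g hg
  choose v hv hv_mem using fun i => perfectlyNormalSpace_iff_forall_isClosed_preimage_zero.1
    ‹_› _ (hU_open i).isClosed_compl
  have hv_pos : ∀ i, ∀ x ∈ U i, 0 < v i x := fun i x hx =>
    (hv_mem i x).1.lt_of_ne' fun h0 => (hv i ▸ h0 : x ∈ (U i)ᶜ) hx
  have hv_zero : ∀ i, ∀ x ∉ U i, v i x = 0 := fun i x hx => (hv i ▸ hx : x ∈ v i ⁻¹' {0})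
  let u : ι × ℕ → C(X, ℝ) := fun p => ⟨fun x => min 1 (p.2 * v p.1 x), by fun_prop⟩
  refine hT.map_eq_zero_of_forall_exists_eq_one (u := u) (fun p => (hU p.1).mono fun x hx => ?_)
    fun x hx => ?_
  · by_contra hxU
    exact hx (by simp [u, hv_zero p.1 x hxU])
  · obtain ⟨i, hi⟩ := mem_iUnion.1 (not_not.1 fun h => hx (hg x h))
    obtain ⟨k, hk⟩ := exists_nat_ge (v i x)⁻¹
    refine ⟨(i, k), min_eq_left ?_⟩
    simpa [inv_mul_cancel₀ (hv_pos i x hi).ne'] using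
      mul_le_mul_of_nonneg_right hk (hv_pos i x hi).le

theorem nullOn_compl_opSupport [PerfectlyNormalSpace X] [SecondCountableTopology X]
    (hT : SeqContinuousPointwiseWeak T) : NullOn T (opSupport T)ᶜ := by
  obtain ⟨𝒯, h𝒯_countable, h𝒯, h𝒯_eq⟩ :=
    TopologicalSpace.isOpen_sUnion_countable {U | IsOpen U ∧ NullOn T U} fun U hU => hU.1
  have := h𝒯_countable.to_subtype
  rw [opSupport, compl_compl, ← h𝒯_eq, sUnion_eq_iUnion]
  exact hT.nullOn_iUnion (fun U => (h𝒯 U.2).1) fun U => (h𝒯 U.2).2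

theorem finite_opSupport {Z : Type*} [MetricSpace Z] {T : C(Z, ℝ) →ₗ[ℝ] E}
    (hT : SeqContinuousPointwiseWeak T) : (opSupport T).Finite := by
  by_contra hS
  have : Infinite (opSupport T) := Set.infinite_coe_iff.2 hS
  obtain ⟨V, hV_inf, hV_open, hV_disj⟩ := exists_seq_infinite_isOpen_pairwise_disjoint (opSupport T)
  choose s hs using fun n => (hV_inf n).nonempty
  choose r hr hrV using fun n => Metric.isOpen_iff.1 (hV_open n) (s n) (hs n)
  have hsep : ∀ m n, m ≠ n → r n ≤ dist (s m) (s n) := fun m n hmn =>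
    not_lt.1 fun hlt => disjoint_left.1 (hV_disj hmn) (hs m) (hrV n (mem_ball.2 hlt))
  have hdisj : Pairwise (Disjoint on fun n => ball (s n : Z) (r n / 2)) := fun m n hmn => by
    refine ball_disjoint_ball ?_
    have := hsep m n hmn
    have := hsep n m hmn.symm
    rw [dist_comm, Subtype.dist_eq] at this
    rw [Subtype.dist_eq] at *
    linarith
  obtain ⟨n, hn⟩ := hT.exists_nullOn_of_pairwise_disjoint hdisj
  exact (s n).2 (mem_sUnion.2 ⟨_, ⟨isOpen_ball, hn⟩, mem_ball_self (half_pos (hr n))⟩)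

theorem finiteDimensional_range [TopologicalSpace.MetrizableSpace X] [SecondCountableTopology X]
    (hT : SeqContinuousPointwiseWeak T) : FiniteDimensional ℝ (LinearMap.range T) := by
  let := TopologicalSpace.metrizableSpaceMetric X
  have := hT.finite_opSupport.to_subtype
  let ev : C(X, ℝ) →ₗ[ℝ] (opSupport T → ℝ) :=
    LinearMap.pi fun x => (ContinuousMap.evalCLM ℝ (x : X)).toLinearMap
  refine ev.finiteDimensional_range_of_ker_le fun f hf => hT.nullOn_compl_opSupport f fun x hx => ?_
  exact congrFun hf ⟨x, not_not.1 hx⟩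

end SeqContinuousPointwiseWeak

end

theorem stmt2_general {X : Type*} [TopologicalSpace X]
    {E : Type*} [NormedAddCommGroup E] [NormedSpace ℝ E]
    (T : C(X, ℝ) →ₗ[ℝ] E)
    (hT : ∀ (f : ℕ → C(X, ℝ)) (g : C(X, ℝ)),
      (∀ x, Tendsto (fun n => f n x) atTop (𝓝 (g x))) →
      ∀ φ : E →L[ℝ] ℝ, Tendsto (fun n => φ (T (f n))) atTop (𝓝 (φ (T g)))) :
    FiniteDimensional ℝ (LinearMap.range T) := by
  by_contra h_inf
  obtain ⟨v, hv, hv_mem⟩ := Submodule.exists_linearIndependent_nat_mem h_inf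
  choose f hf using hv_mem
  let T' := T ∘ₗ (ContinuousMap.compRightAlgHom ℝ ℝ (ContinuousMap.pi f)).toLinearMap
  have : FiniteDimensional ℝ (LinearMap.range T') :=
    (SeqContinuousPointwiseWeak.comp_compRight hT _).finiteDimensional_range
  have hv_mem' : ∀ n, v n ∈ LinearMap.range T' := fun n =>
    ⟨⟨fun y => y n, continuous_apply n⟩, hf n⟩
  have hw : LinearIndependent ℝ fun n => (⟨v n, hv_mem' n⟩ : LinearMap.range T') :=
    .of_comp (LinearMap.range T').subtype hv
  exact Module.Finite.not_linearIndependent_of_infinite _ hw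

theorem stmt2 {X : Type*} [TopologicalSpace X] [T35Space X]
    {E : Type*} [NormedAddCommGroup E] [NormedSpace ℝ E] [CompleteSpace E]
    (T : C(X, ℝ) →ₗ[ℝ] E)
    (hT : ∀ (f : ℕ → C(X, ℝ)) (g : C(X, ℝ)),
      (∀ x, Tendsto (fun n => f n x) atTop (𝓝 (g x))) →
      ∀ φ : E →L[ℝ] ℝ, Tendsto (fun n => φ (T (f n))) atTop (𝓝 (φ (T g)))) :
    FiniteDimensional ℝ (LinearMap.range T) :=
  stmt2_general T hT
end

section
/- Let E be a Banach space. There exists a continuous surjection T: C_p(S) → E_w, where S is the convergent sequence, if and only if E is separable. -/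
open Filter Topology

/-- The convergent sequence `S = {0} ∪ {1/(n+1) : n ∈ ℕ}` as a subspace of `ℝ`. -/
def convSeq : Set ℝ := {0} ∪ {x : ℝ | ∃ n : ℕ, x = 1 / (n + 1)}

/-- `C_p(X)`: continuous real-valued functions on `X` with the topology of
pointwise convergence (subspace topology of the product `X → ℝ`). -/
def Cp (X : Type*) [TopologicalSpace X] : Type _ := {f : X → ℝ // Continuous f}

instance (X : Type*) [TopologicalSpace X] : TopologicalSpace (Cp X) :=
  instTopologicalSpaceSubtype

/-!
A continuous image of `C_p(S)`, a second countable space, is separable; in `E_w` the span of a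
countable dense set has weak closure `E`, and the weak and norm closures of a convex set agree.

Conversely, a separable Banach space is a continuous image of `ℕ → ℕ`. The closed set of
`f ∈ C_p(S)` mapping `S` into itself with `f 0 = 0` maps continuously onto `ℕ → ℕ`: the first
index `k` with `f (1/(k+1)) < 1/(j+1)` is locally constant in `f`, because for values in `S` the
condition `< 1/(j+1)` is the same as `≤ 1/(j+2)`; the gaps between these indices can be prescribed
arbitrarily. Dugundji's theorem extends the composite to all of `C_p(S)`, and `E → E_w` is
continuous.
-/

open Set Function Metric TopologicalSpace OnePoint

lemma continuous_nat_find {X : Type*} [TopologicalSpace X] {P : X → ℕ → Prop}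
    [∀ x, DecidablePred (P x)] (hP : ∀ k, IsClopen {x | P x k}) (h : ∀ x, ∃ k, P x k) :
    Continuous fun x => Nat.find (h x) := by
  refine continuous_discrete_rng.2 fun k => ?_
  have : (fun x => Nat.find (h x)) ⁻¹' {k} =
      {x | P x k} ∩ ⋂ i ∈ Finset.range k, {x | P x i}ᶜ := by
    ext x
    simp [Nat.find_eq_iff]
  rw [this]
  exact (hP k).isOpen.inter (isOpen_biInter_finset fun i _ => (hP i).compl.isOpen)

lemma StrictMono.le_findGreatest_iff {b : ℕ → ℕ} (hb : StrictMono b) (h0 : b 0 = 0) {j k : ℕ} :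
    j ≤ Nat.findGreatest (fun i => b i ≤ k) k ↔ b j ≤ k :=
  ⟨fun h => (hb.monotone h).trans
      (Nat.findGreatest_spec (P := fun i => b i ≤ k) (Nat.zero_le k) (by simp [h0])),
    fun h => Nat.le_findGreatest ((hb.id_le j).trans h) h⟩

section Dugundji

variable {X E : Type*} [MetricSpace X] [NormedAddCommGroup E] [NormedSpace ℝ E]

lemma dist_lt_five_mul_of_lt_infDist {A : Set X} {a x y z : X} (ha : a ∈ A)
    (hxy : dist x y < infDist y A / 3) (hzy : dist z y < 2 * infDist y A) :
    dist z a < 5 * dist x a := by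
  have hyA : infDist y A ≤ dist y x + dist x a :=
    (infDist_le_dist_of_mem ha).trans (dist_triangle y x a)
  have := dist_triangle4 z y x a
  rw [dist_comm y x] at hyA this
  linarith [infDist_nonneg (x := y) (s := A)]

lemma continuousAt_of_forall_mem_convex {A : Set X} {g : A → E} {G : X → E} {a : A}
    (hg : ContinuousAt g a) (hGA : ∀ b : A, G b = g b)
    (hG : ∀ x ∉ A, ∀ t : Set E, Convex ℝ t →
      (∀ b : A, dist (b : X) a < 5 * dist x a → g b ∈ t) → G x ∈ t) :
    ContinuousAt G a := by
  rw [Metric.continuousAt_iff] at hg ⊢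
  intro ε hε
  obtain ⟨δ, hδ, hgδ⟩ := hg ε hε
  refine ⟨δ / 5, by positivity, fun x hx => ?_⟩
  rw [hGA]
  by_cases hxA : x ∈ A
  · rw [show x = (⟨x, hxA⟩ : A) from rfl, hGA]
    exact hgδ (by rw [Subtype.dist_eq]; linarith)
  · refine mem_ball.1 (hG x hxA _ (convex_ball _ _) fun b hb => mem_ball.2 (hgδ ?_))
    rw [Subtype.dist_eq]
    linarith

end Dugundji

-- Dugundji: off `A`, average the values of `g` at points of `A` nearly closest to the centres of
-- a locally finite cover of `Aᶜ` by balls `B(y, d(y, A) / 3)`.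
theorem exists_continuous_extension_of_isClosed {X E : Type*} [TopologicalSpace X]
    [MetrizableSpace X] [NormedAddCommGroup E] [NormedSpace ℝ E] {A : Set X} (hA : IsClosed A)
    {g : A → E} (hg : Continuous g) : ∃ G : X → E, Continuous G ∧ ∀ a : A, G a = g a := by
  let := metrizableSpaceMetric X
  classical
  obtain rfl | hne := A.eq_empty_or_nonempty
  · exact ⟨0, continuous_const, fun a => a.2.elim⟩
  have hpos (y : ↥Aᶜ) : 0 < infDist (y : X) A := (hA.notMem_iff_infDist_pos hne).1 y.2
  obtain ⟨φ, hφ⟩ := PartitionOfUnity.exists_isSubordinate isClosed_univ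
    (fun y : ↥Aᶜ => ((↑) : ↥Aᶜ → X) ⁻¹' ball (y : X) (infDist (y : X) A / 3))
    (fun _ => isOpen_ball.preimage continuous_subtype_val)
    (fun y _ => mem_iUnion.2 ⟨y, mem_ball_self (by linarith [hpos y])⟩)
  have hnear (y : ↥Aᶜ) : ∃ z : A, dist (z : X) y < 2 * infDist (y : X) A := by
    obtain ⟨z, hz, hyz⟩ := (infDist_lt_iff hne).1 (by linarith [hpos y] :
      infDist (y : X) A < 2 * infDist (y : X) A)
    exact ⟨⟨z, hz⟩, by rwa [dist_comm]⟩
  choose near hnear using hnear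
  set H : ↥Aᶜ → E := fun x => ∑ᶠ y, φ y x • g (near y)
  have hH : Continuous H := φ.continuous_finsum_smul fun _ _ _ => continuousAt_const
  set G : X → E := fun x => if hx : x ∈ A then g ⟨x, hx⟩ else H ⟨x, hx⟩
  have hGA (a : A) : G a = g a := dif_pos a.2
  refine ⟨G, continuous_iff_continuousAt.2 fun x => ?_, hGA⟩
  by_cases hx : x ∈ A
  · refine continuousAt_of_forall_mem_convex (a := ⟨x, hx⟩) hg.continuousAt hGA
      fun x' hx' t ht hgt => ?_
    rw [show G x' = H ⟨x', hx'⟩ from dif_neg hx']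
    refine φ.finsum_smul_mem_convex (g := fun y _ => g (near y)) (mem_univ _)
      (fun y hy => hgt _ ?_) ht
    exact dist_lt_five_mul_of_lt_infDist hx (hφ y (subset_closure hy)) (hnear y)
  · have hGH : ContinuousOn G Aᶜ := by
      rw [continuousOn_iff_continuous_domRestrict]
      convert hH using 1
      funext y
      exact dif_neg y.2
    exact hGH.continuousAt (hA.isOpen_compl.mem_nhds hx)

theorem separableSpace_of_separableSpace_weakSpace {E : Type*} [AddCommGroup E] [Module ℝ E]
    [TopologicalSpace E] [IsTopologicalAddGroup E] [ContinuousSMul ℝ E] [LocallyConvexSpace ℝ E]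
    [SeparableSpace (WeakSpace ℝ E)] : SeparableSpace E := by
  obtain ⟨D, hDc, hDd⟩ := exists_countable_dense (WeakSpace ℝ E)
  set s : Submodule ℝ E := Submodule.span ℝ ((toWeakSpace ℝ E).symm '' D)
  have hs : closure (s : Set E) = univ := by
    refine (toWeakSpace ℝ E).injective.image_injective ?_
    rw [Convex.toWeakSpace_closure ℝ s.convex, image_univ, (toWeakSpace ℝ E).surjective.range_eq,
      eq_univ_iff_forall]
    refine fun w => closure_mono ?_ (hDd w)
    rw [← (toWeakSpace ℝ E).image_symm_image D]
    exact image_mono Submodule.subset_span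
  exact isSeparable_univ_iff.1 (hs ▸ (hDc.image _).isSeparable.span.closure)

instance {X : Type*} [TopologicalSpace X] [Countable X] : MetrizableSpace (Cp X) :=
  inferInstanceAs (MetrizableSpace {f : X → ℝ | Continuous f})

instance {X : Type*} [TopologicalSpace X] [Countable X] : SecondCountableTopology (Cp X) :=
  inferInstanceAs (SecondCountableTopology {f : X → ℝ | Continuous f})

lemma Cp.continuous_eval {X : Type*} [TopologicalSpace X] (x : X) :
    Continuous fun f : Cp X => f.1 x :=
  (continuous_apply x).comp continuous_subtype_val

noncomputable def convSeqHomeomorph : OnePoint ℕ ≃ₜ convSeq :=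
  Continuous.homeoOfEquivCompactToT2 (f := Equiv.ofBijective
    (fun x : OnePoint ℕ => x.elim ⟨0, Or.inl rfl⟩ fun n => ⟨1 / (n + 1), Or.inr ⟨n, rfl⟩⟩) (by
      constructor
      · rintro (_ | m) (_ | n) h <;> simp only [OnePoint.elim, Option.elim, Subtype.ext_iff] at h
        · rfl
        · exact absurd h.symm Nat.one_div_pos_of_nat.ne'
        · exact absurd h Nat.one_div_pos_of_nat.ne'
        · rw [show m = n by simpa using h]
      · rintro ⟨x, rfl | ⟨n, rfl⟩⟩
        exacts [⟨∞, rfl⟩, ⟨n, rfl⟩]))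
    (by
      rw [continuous_iff_from_discrete, Nat.cofinite_eq_atTop]
      exact tendsto_subtype_rng.2 tendsto_one_div_add_atTop_nhds_zero_nat)

lemma isClosed_convSeq : IsClosed convSeq :=
  have : CompactSpace convSeq := convSeqHomeomorph.compactSpace
  (isCompact_iff_compactSpace.2 this).isClosed

lemma one_div_le_of_mem_convSeq {v : ℝ} (hv : v ∈ convSeq) {j : ℕ} (h : 1 / ((j : ℝ) + 2) < v) :
    1 / ((j : ℝ) + 1) ≤ v := by
  obtain rfl | ⟨m, rfl⟩ := hv
  · exact absurd h (by simp only [not_lt]; positivity)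
  · rw [one_div_lt_one_div (by positivity) (by positivity)] at h
    have hmj : m < j + 1 := by exact_mod_cast (by linarith : (m : ℝ) < j + 1)
    have : (m : ℝ) ≤ j := Nat.cast_le.2 (Nat.lt_succ_iff.1 hmj)
    exact one_div_le_one_div_of_le (by positivity) (by linarith)

instance : Countable convSeq := convSeqHomeomorph.surjective.countable

lemma exists_cp_convSeq_of_tendsto {c : ℕ → ℝ} {L : ℝ} (hc : Tendsto c atTop (𝓝 L)) :
    ∃ f : Cp convSeq, f.1 (convSeqHomeomorph ∞) = L ∧ ∀ n : ℕ, f.1 (convSeqHomeomorph n) = c n :=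
  ⟨⟨fun s => (convSeqHomeomorph.symm s).elim L c,
    ((continuous_iff_from_discrete fun x : OnePoint ℕ => x.elim L c).2
      (by rwa [Nat.cofinite_eq_atTop])).comp convSeqHomeomorph.symm.continuous⟩,
    by simp, fun n => by simp⟩

def selfMapsFixingZero : Set (Cp convSeq) :=
  {f | f.1 (convSeqHomeomorph ∞) = 0 ∧ ∀ n : ℕ, f.1 (convSeqHomeomorph n) ∈ convSeq}

lemma isClosed_selfMapsFixingZero : IsClosed selfMapsFixingZero := by
  simp only [selfMapsFixingZero, ofPred_and, ofPred_forall]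
  exact (isClosed_eq (Cp.continuous_eval _) continuous_const).inter
    (isClosed_iInter fun n => isClosed_convSeq.preimage (Cp.continuous_eval _))

namespace selfMapsFixingZero

lemma exists_lt_one_div (f : selfMapsFixingZero) (j : ℕ) :
    ∃ k : ℕ, f.1.1 (convSeqHomeomorph k) < 1 / (j + 1) := by
  have h := (continuous_iff_from_discrete _).1 (f.1.2.comp convSeqHomeomorph.continuous)
  rw [comp_apply, f.2.1, Nat.cofinite_eq_atTop] at h
  exact (h.eventually (gt_mem_nhds (by positivity))).exists

noncomputable def firstBelow (f : selfMapsFixingZero) (j : ℕ) : ℕ :=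
  Nat.find (exists_lt_one_div f j)

lemma isClopen_setOf_lt_one_div (k j : ℕ) :
    IsClopen {f : selfMapsFixingZero | f.1.1 (convSeqHomeomorph k) < 1 / (j + 1)} := by
  have hcont : Continuous fun f : selfMapsFixingZero => f.1.1 (convSeqHomeomorph k) :=
    (Cp.continuous_eval _).comp continuous_subtype_val
  refine ⟨?_, isOpen_lt hcont continuous_const⟩
  have : {f : selfMapsFixingZero | f.1.1 (convSeqHomeomorph k) < 1 / (j + 1)}ᶜ =
      {f | 1 / ((j : ℝ) + 2) < f.1.1 (convSeqHomeomorph k)} := by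
    ext f
    simp only [mem_compl_iff, mem_ofPred_eq, not_lt]
    refine ⟨lt_of_lt_of_le (one_div_lt_one_div_of_lt (by positivity) (by linarith)),
      one_div_le_of_mem_convSeq (f.2.2 k)⟩
  exact isOpen_compl_iff.1 (this ▸ isOpen_lt continuous_const hcont)

lemma continuous_firstBelow (j : ℕ) : Continuous fun f => firstBelow f j :=
  continuous_nat_find (fun k => isClopen_setOf_lt_one_div k j) _

noncomputable def gapSeq (f : selfMapsFixingZero) (j : ℕ) : ℕ :=
  firstBelow f (j + 1) - firstBelow f j - 1

lemma continuous_gapSeq : Continuous gapSeq :=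
  continuous_pi fun j =>
    ((continuous_firstBelow (j + 1)).sub (continuous_firstBelow j)).sub continuous_const

lemma gapSeq_surjective : Surjective gapSeq := by
  intro α
  set b : ℕ → ℕ := fun j => ∑ i ∈ Finset.range j, (α i + 1)
  have hb_succ : ∀ j, b (j + 1) = b j + α j + 1 := fun j => Finset.sum_range_succ _ _
  have hb : StrictMono b := strictMono_nat_of_lt_succ fun j => by rw [hb_succ]; omega
  set h : ℕ → ℕ := fun k => Nat.findGreatest (fun i => b i ≤ k) k
  have hh : ∀ j k, j ≤ h k ↔ b j ≤ k := fun j k => hb.le_findGreatest_iff (by simp [b])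
  have htend : Tendsto (fun k => h k + 1) atTop atTop :=
    tendsto_atTop_atTop.2 fun j => ⟨b j, fun k hk => ((hh j k).2 hk).trans (Nat.le_succ _)⟩
  obtain ⟨f, hf0, hf⟩ :=
    exists_cp_convSeq_of_tendsto (tendsto_one_div_add_atTop_nhds_zero_nat.comp htend)
  have hfA : f ∈ selfMapsFixingZero := ⟨hf0, fun k => hf k ▸ Or.inr ⟨h k + 1, rfl⟩⟩
  have hfirst : ∀ j, firstBelow ⟨f, hfA⟩ j = b j := by
    intro j
    -- `f` at the `k`-th point is `1 / (h k + 2)`, which drops below `1 / (j + 1)` from `k = b j` on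
    have key : ∀ k : ℕ, f.1 (convSeqHomeomorph k) < 1 / (j + 1) ↔ b j ≤ k := fun k => by
      rw [hf, comp_apply, one_div_lt_one_div (by positivity) (by positivity), ← hh]
      norm_cast
      omega
    exact (Nat.find_eq_iff _).2 ⟨(key _).2 le_rfl, fun k hk => by rw [key]; omega⟩
  refine ⟨⟨f, hfA⟩, funext fun j => ?_⟩
  simp only [gapSeq, hfirst, hb_succ]
  omega

end selfMapsFixingZero

open selfMapsFixingZero in
theorem exists_continuous_surjective_cp_convSeq (E : Type*) [NormedAddCommGroup E]
    [NormedSpace ℝ E] [CompleteSpace E] [SeparableSpace E] :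
    ∃ T : Cp convSeq → E, Continuous T ∧ Surjective T := by
  obtain ⟨u, hu, hus⟩ := exists_nat_nat_continuous_surjective_of_completeSpace E
  obtain ⟨G, hG, hGA⟩ :=
    exists_continuous_extension_of_isClosed isClosed_selfMapsFixingZero
      (hu.comp continuous_gapSeq)
  refine ⟨G, hG, fun x => ?_⟩
  obtain ⟨α, rfl⟩ := hus x
  obtain ⟨f, rfl⟩ := gapSeq_surjective α
  exact ⟨f, hGA f⟩

theorem stmt5 (E : Type*) [NormedAddCommGroup E] [NormedSpace ℝ E] [CompleteSpace E] :
    (∃ T : Cp ↥convSeq → WeakSpace ℝ E, Continuous T ∧ Function.Surjective T) ↔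
      TopologicalSpace.SeparableSpace E := by
  constructor
  · rintro ⟨T, hT, hTs⟩
    have := hTs.denseRange.separableSpace hT
    exact separableSpace_of_separableSpace_weakSpace
  · intro
    obtain ⟨T, hT, hTs⟩ := exists_continuous_surjective_cp_convSeq E
    exact ⟨toWeakSpaceCLM ℝ E ∘ T, (toWeakSpaceCLM ℝ E).continuous.comp hT,
      (toWeakSpace ℝ E).surjective.comp hTs⟩
end

section
/- Let X be an infinite Tychonoff space, E a Banach space, and T: C_p(X) → E_w a sequentially continuous map. Define B(T) as the set of points t ∈ X having an open neighborhood U such that sup{‖T(f)‖ : f ∈ C(X), supp(f) ⊆ U} < ∞. Then X \ B(T) is finite. -/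
open Filter Topology Function

/-!
If infinitely many points lie outside `B(T)`, separating points by disjoint closed neighbourhoods
lets us choose infinitely many of them with pairwise disjoint open neighbourhoods `N n`, and on
`N n` a function `f n` with `n < ‖T (f n)‖`. The `f n` have disjoint supports, so they tend to `0` pointwise; hence
`T (f n)` converges weakly and is weakly bounded. By the uniform boundedness principle (applied
in the bidual) it is norm bounded, a contradiction.
-/

theorem exists_norm_le_of_bddAbove_norm_dual {𝕜 E ι : Type*} [RCLike 𝕜] [NormedAddCommGroup E]
    [NormedSpace 𝕜 E] (v : ι → E)
    (hv : ∀ φ : StrongDual 𝕜 E, BddAbove (Set.range fun i => ‖φ (v i)‖)) :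
    ∃ C, ∀ i, ‖v i‖ ≤ C := by
  obtain ⟨C, hC⟩ := banach_steinhaus (g := fun i => NormedSpace.inclusionInDoubleDual 𝕜 E (v i))
    fun φ => (hv φ).imp fun _ hC i => hC ⟨i, rfl⟩
  exact ⟨C, fun i => (NormedSpace.inclusionInDoubleDualLi 𝕜).norm_map (v i) ▸ hC i⟩

theorem tendsto_zero_of_pairwise_disjoint_support {α M : Type*} [Zero M] [TopologicalSpace M]
    {f : ℕ → α → M} (hf : Pairwise (Disjoint on fun n => Function.support (f n))) (x : α) :
    Tendsto (fun n => f n x) atTop (𝓝 0) := by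
  have hsub : {n | f n x ≠ 0}.Subsingleton := fun m hm n hn =>
    hf.eq (Set.not_disjoint_iff.2 ⟨x, hm, hn⟩)
  refine tendsto_const_nhds.congr' ?_
  rw [← Nat.cofinite_eq_atTop]
  exact Filter.eventually_cofinite.2 (by simpa [eq_comm] using hsub.finite)

section T25

variable {X : Type*} [TopologicalSpace X] [T25Space X] {A : Set X}

theorem exists_isOpen_disjoint_of_infinite_inter {G : Set X} (hG : IsOpen G)
    (hA : (A ∩ G).Infinite) :
    ∃ x ∈ A, ∃ N G' : Set X, IsOpen N ∧ x ∈ N ∧ N ⊆ G ∧ IsOpen G' ∧ G' ⊆ G ∧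
      Disjoint N G' ∧ (A ∩ G').Infinite := by
  have key : ∀ x ∈ A ∩ G, ∀ U, IsOpen U → x ∈ U → (A ∩ (G \ closure U)).Infinite →
      ∃ x ∈ A, ∃ N G' : Set X, IsOpen N ∧ x ∈ N ∧ N ⊆ G ∧ IsOpen G' ∧ G' ⊆ G ∧
        Disjoint N G' ∧ (A ∩ G').Infinite := fun x hx U hU hxU hinf =>
    ⟨x, hx.1, U ∩ G, G \ closure U, hU.inter hG, ⟨hxU, hx.2⟩, Set.inter_subset_right,
      hG.sdiff isClosed_closure, Set.sdiff_subset,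
      Set.disjoint_left.2 fun y hy hy' => hy'.2 (subset_closure hy.1), hinf⟩
  -- As `closure U` and `closure V` are disjoint, if `a` leaves only finitely many points of `A ∩ G`
  -- outside `closure U`, then `b` leaves infinitely many outside `closure V`.
  obtain ⟨a, ha, b, hb, hab⟩ := hA.nontrivial
  obtain ⟨U, haU, hU, V, hbV, hV, hUV⟩ := exists_open_nhds_disjoint_closure hab
  by_cases hfin : (A ∩ (G \ closure U)).Infinite
  · exact key a ha U hU haU hfin
  · refine key b hb V hV hbV ((hA.sdiff (Set.not_infinite.1 hfin)).mono ?_)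
    rintro y ⟨⟨hyA, hyG⟩, hy⟩
    have hyU : y ∈ closure U := by_contra fun h => hy ⟨hyA, hyG, h⟩
    exact ⟨hyA, hyG, Set.disjoint_left.1 hUV hyU⟩

theorem Set.Infinite.exists_seq_pairwise_disjoint_isOpen (hA : A.Infinite) :
    ∃ (t : ℕ → X) (N : ℕ → Set X), (∀ n, t n ∈ A) ∧ (∀ n, IsOpen (N n)) ∧
      (∀ n, t n ∈ N n) ∧ Pairwise (Disjoint on N) := by
  let State := {G : Set X // IsOpen G ∧ (A ∩ G).Infinite}
  have step : ∀ G : State, ∃ x ∈ A, ∃ N, ∃ G' : State, IsOpen N ∧ x ∈ N ∧ N ⊆ G.1 ∧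
      G'.1 ⊆ G.1 ∧ Disjoint N G'.1 := fun G => by
    obtain ⟨x, hx, N, G', hN, hxN, hNG, hG', hG'G, hdisj, hinf⟩ :=
      exists_isOpen_disjoint_of_infinite_inter G.2.1 G.2.2
    exact ⟨x, hx, N, ⟨G', hG', hinf⟩, hN, hxN, hNG, hG'G, hdisj⟩
  choose x hx N next hN hxN hNG hnext hdisj using step
  let G : ℕ → State := fun n => next^[n] ⟨Set.univ, isOpen_univ, by simpa using hA⟩
  have hG_succ (n : ℕ) : G (n + 1) = next (G n) := Function.iterate_succ_apply' next n _
  have hG_anti : Antitone fun n => (G n).1 :=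
    antitone_nat_of_succ_le fun n => hG_succ n ▸ hnext (G n)
  refine ⟨fun n => x (G n), fun n => N (G n), fun n => hx _, fun n => hN _, fun n => hxN _,
    (pairwise_disjoint_on _).2 fun m n hmn => ?_⟩
  exact (hG_succ m ▸ hdisj (G m)).mono_right ((hNG (G n)).trans (hG_anti hmn))

end T25

theorem stmt6_general {X : Type*} [TopologicalSpace X] [T35Space X]
    {E : Type*} [NormedAddCommGroup E] [NormedSpace ℝ E]
    (T : C(X, ℝ) → E)
    (hT : ∀ (f : ℕ → C(X, ℝ)) (g : C(X, ℝ)),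
      (∀ x, Tendsto (fun n => f n x) atTop (𝓝 (g x))) →
      ∀ φ : E →L[ℝ] ℝ, Tendsto (fun n => φ (T (f n))) atTop (𝓝 (φ (T g)))) :
    Set.Finite {t : X | ¬ ∃ U : Set X, IsOpen U ∧ t ∈ U ∧
      ∃ M : ℝ, ∀ f : C(X, ℝ), Function.support f ⊆ U → ‖T f‖ ≤ M} := by
  by_contra hinf
  obtain ⟨t, N, htA, hN, htN, hdisj⟩ := Set.Infinite.exists_seq_pairwise_disjoint_isOpen hinf
  have hf (n : ℕ) : ∃ f : C(X, ℝ), Function.support f ⊆ N n ∧ (n : ℝ) < ‖T f‖ := by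
    by_contra! h
    exact htA n ⟨N n, hN n, htN n, n, h⟩
  choose f hsupp hnorm using hf
  have hf_zero (x : X) : Tendsto (fun n => f n x) atTop (𝓝 ((0 : C(X, ℝ)) x)) :=
    tendsto_zero_of_pairwise_disjoint_support (f := fun n => ⇑(f n))
      (fun m n hmn => (hdisj hmn).mono (hsupp m) (hsupp n)) x
  obtain ⟨C, hC⟩ := exists_norm_le_of_bddAbove_norm_dual (𝕜 := ℝ) (fun n => T (f n))
    fun φ => (hT f 0 hf_zero φ).norm.bddAbove_range
  obtain ⟨n, hn⟩ := exists_nat_gt C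
  exact (hn.trans (hnorm n)).not_ge (hC n)

theorem stmt6 {X : Type*} [TopologicalSpace X] [T35Space X] [Infinite X]
    {E : Type*} [NormedAddCommGroup E] [NormedSpace ℝ E] [CompleteSpace E]
    (T : C(X, ℝ) → E)
    (hT : ∀ (f : ℕ → C(X, ℝ)) (g : C(X, ℝ)),
      (∀ x, Tendsto (fun n => f n x) atTop (𝓝 (g x))) →
      ∀ φ : E →L[ℝ] ℝ, Tendsto (fun n => φ (T (f n))) atTop (𝓝 (φ (T g)))) :
    Set.Finite {t : X | ¬ ∃ U : Set X, IsOpen U ∧ t ∈ U ∧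
      ∃ M : ℝ, ∀ f : C(X, ℝ), Function.support f ⊆ U → ‖T f‖ ≤ M} :=
  stmt6_general T hT
end

section
/- Let X be an infinite regular Hausdorff space and A an infinite subset of X. Then there exist a sequence (t_n) of points of A and a sequence (U_n) of pairwise disjoint open subsets of X with t_n ∈ U_n for every n. -/
/-!
Distinct points of a T₂.₅ space have open neighbourhoods with disjoint closures, so an infinite
set `S` is covered by the two complements of these closures and one of them meets `S` in an
infinite set. This splits off one point of `S` inside an open set `U`, disjoint from an open `V`
still containing infinitely many points of `S`. Iterating inside `V` produces the points `tₙ`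
and a decreasing chain of open sets, each disjoint from the neighbourhoods chosen before it.
-/

open Function Set

theorem Set.Infinite.exists_mem_isOpen_disjoint_infinite_inter {X : Type*} [TopologicalSpace X]
    [T25Space X] {S : Set X} (hS : S.Infinite) :
    ∃ t ∈ S, ∃ U V : Set X, IsOpen U ∧ IsOpen V ∧ t ∈ U ∧ Disjoint U V ∧ (S ∩ V).Infinite := by
  obtain ⟨x, hx, y, hy, hxy⟩ := hS.nontrivial
  obtain ⟨u, hxu, hu, v, hyv, hv, huv⟩ := exists_open_nhds_disjoint_closure hxy
  have hcover : S ∩ (closure u)ᶜ ∪ S ∩ (closure v)ᶜ = S := by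
    rw [← inter_union_distrib_left, ← compl_inter, huv.inter_eq, compl_empty, inter_univ]
  rcases infinite_union.1 (hcover.symm ▸ hS) with hinf | hinf
  · exact ⟨x, hx, u, _, hu, isClosed_closure.isOpen_compl, hxu,
      disjoint_compl_right.mono_left subset_closure, hinf⟩
  · exact ⟨y, hy, v, _, hv, isClosed_closure.isOpen_compl, hyv,
      disjoint_compl_right.mono_left subset_closure, hinf⟩

theorem Set.Infinite.exists_mem_isOpen_disjoint_infinite_inter_within {X : Type*}
    [TopologicalSpace X] [T25Space X] {A W : Set X} (hW : IsOpen W) (hAW : (A ∩ W).Infinite) :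
    ∃ t ∈ A, ∃ U V : Set X, IsOpen U ∧ IsOpen V ∧ t ∈ U ∧ U ⊆ W ∧ V ⊆ W ∧ Disjoint U V ∧
      (A ∩ V).Infinite := by
  obtain ⟨t, htAW, U, V, hU, hV, htU, hUV, hinf⟩ := hAW.exists_mem_isOpen_disjoint_infinite_inter
  refine ⟨t, htAW.1, U ∩ W, V ∩ W, hU.inter hW, hV.inter hW, ⟨htU, htAW.2⟩, inter_subset_right,
    inter_subset_right, hUV.mono inter_subset_left inter_subset_left, ?_⟩
  rwa [inter_comm V, ← inter_assoc]

theorem pairwise_disjoint_of_subset_of_disjoint_succ {α : Type*} [PartialOrder α] [OrderBot α]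
    {U W : ℕ → α} (hW : Antitone W) (hUW : ∀ n, U n ≤ W n)
    (hdisj : ∀ n, Disjoint (U n) (W (n + 1))) : Pairwise (Disjoint on U) :=
  (pairwise_disjoint_on U).2 fun _ _ hmn => (hdisj _).mono_right ((hUW _).trans (hW hmn))

theorem stmt7_general {X : Type*} [TopologicalSpace X] [RegularSpace X] [T2Space X]
    (A : Set X) (hA : A.Infinite) :
    ∃ (t : ℕ → X) (U : ℕ → Set X), (∀ n, t n ∈ A) ∧ (∀ n, IsOpen (U n)) ∧
      (∀ n, t n ∈ U n) ∧ Pairwise (Function.onFun Disjoint U) := by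
  let T := {W : Set X // IsOpen W ∧ (A ∩ W).Infinite}
  have step (W : T) : ∃ (t : X) (U : Set X) (V : T), t ∈ A ∧ IsOpen U ∧ t ∈ U ∧ U ⊆ W.1 ∧
      V.1 ⊆ W.1 ∧ Disjoint U V.1 := by
    obtain ⟨t, htA, U, V, hU, hV, htU, hUW, hVW, hUV, hinf⟩ :=
      Set.Infinite.exists_mem_isOpen_disjoint_infinite_inter_within W.2.1 W.2.2
    exact ⟨t, U, ⟨V, hV, hinf⟩, htA, hU, htU, hUW, hVW, hUV⟩
  choose t U next htA hU htU hUW hnext hdisj using step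
  let W (n : ℕ) : T := next^[n] ⟨univ, isOpen_univ, by rwa [inter_univ]⟩
  have hW_succ (n : ℕ) : W (n + 1) = next (W n) := Function.iterate_succ_apply' _ _ _
  refine ⟨fun n => t (W n), fun n => U (W n), fun n => htA _, fun n => hU _, fun n => htU _,
    pairwise_disjoint_of_subset_of_disjoint_succ (W := fun n => (W n).1) ?_ (fun n => hUW _) ?_⟩
  · exact antitone_nat_of_succ_le fun n => hW_succ n ▸ hnext _
  · exact fun n => hW_succ n ▸ hdisj _

theorem stmt7 {X : Type*} [TopologicalSpace X] [RegularSpace X] [T2Space X] [Infinite X]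
    (A : Set X) (hA : A.Infinite) :
    ∃ (t : ℕ → X) (U : ℕ → Set X), (∀ n, t n ∈ A) ∧ (∀ n, IsOpen (U n)) ∧
      (∀ n, t n ∈ U n) ∧ Pairwise (Function.onFun Disjoint U) :=
  stmt7_general A hA
end

section
/- If a Tychonoff space X is a countable union of scattered compact subsets, then C_p(X) is a Fréchet–Urysohn space. -/
open Filter Topology

/-- A subset `S` of a topological space is scattered if every nonempty subset `T ⊆ S`
has a point isolated in the subspace topology of `T`. -/
def IsScatteredSet {X : Type*} [TopologicalSpace X] (S : Set X) : Prop :=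
  ∀ T ⊆ S, T.Nonempty → ∃ x ∈ T, ∃ U : Set X, IsOpen U ∧ U ∩ T = {x}

/-!
Every cover of a compact scattered set `K` in a regular space by `Gδ` sets has a countable
subcover (the `ℵ₀`-modification of `K` is Lindelöf). Otherwise, by compactness, the set `P` of
points of `K` none of whose neighbourhoods is countably covered is nonempty. An isolated point
`p` of `P` lies in a member `⋂ n, W n` of the cover, and each compact piece `(K ∩ C) \ W n` of
a closed neighbourhood `C` of `p` misses `P`, so it is countably covered; hence so is `K ∩ C`,
contradicting `p ∈ P`.

Finite powers of `X` are again countable unions of compact scattered boxes, which gives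
countable tightness of `C_p(X)`: if `g ∈ closure A`, then `g ∈ closure B` for a countable
`B ⊆ A`. For countable `B`, the countably many open sets `{x | |f x - g x| < 1/(k+1)}`,
`f ∈ B`, are traced at every point `x` by one of countably many points `d j` (every such set
containing `d j` contains `x`), so choosing `f n ∈ B` within `1/(n+1)` of `g` at
`d 0, …, d n` yields a sequence converging pointwise to `g`.
-/

open Set

section Scattered

variable {X Y : Type*} [TopologicalSpace X] [TopologicalSpace Y]

theorem IsScatteredSet.preimage {f : X → Y} (hf : Continuous f) (hinj : Function.Injective f)
    {S : Set Y} (hS : IsScatteredSet S) : IsScatteredSet (f ⁻¹' S) := by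
  intro T hT hTne
  obtain ⟨_, ⟨x, hx, rfl⟩, U, hU, hUT⟩ :=
    hS (f '' T) (image_subset_iff.2 hT) (hTne.image f)
  refine ⟨x, hx, f ⁻¹' U, hU.preimage hf, eq_singleton_iff_unique_mem.2 ⟨⟨?_, hx⟩, ?_⟩⟩
  · exact (eq_singleton_iff_unique_mem.1 hUT).1.1
  · rintro y ⟨hyU, hyT⟩
    exact hinj ((eq_singleton_iff_unique_mem.1 hUT).2 _ ⟨hyU, mem_image_of_mem f hyT⟩)

theorem IsScatteredSet.prod {S : Set X} {T : Set Y} (hS : IsScatteredSet S)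
    (hT : IsScatteredSet T) : IsScatteredSet (S ×ˢ T) := by
  intro W hW hWne
  obtain ⟨_, ⟨w, hw, rfl⟩, U, hU, hUW⟩ :=
    hS (Prod.fst '' W) (image_subset_iff.2 fun p hp => (hW hp).1) (hWne.image _)
  obtain ⟨b, hb, V, hV, hVW⟩ := hT (Prod.mk w.1 ⁻¹' W) (fun y hy => (hW hy).2) ⟨w.2, hw⟩
  rw [eq_singleton_iff_unique_mem] at hUW hVW
  refine ⟨(w.1, b), hb, U ×ˢ V, hU.prod hV,
    eq_singleton_iff_unique_mem.2 ⟨⟨⟨hUW.1.1, hVW.1.1⟩, hb⟩, ?_⟩⟩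
  rintro ⟨x, y⟩ ⟨⟨hx, hy⟩, hxy⟩
  obtain rfl : x = w.1 := hUW.2 x ⟨hx, mem_image_of_mem Prod.fst hxy⟩
  rw [hVW.2 y ⟨hy, hxy⟩]

theorem IsScatteredSet.univ_pi : ∀ {m : ℕ} {S : Fin m → Set X}, (∀ i, IsScatteredSet (S i)) →
    IsScatteredSet (univ.pi S)
  | 0, _, _ => fun _ _ ⟨x, hx⟩ =>
    ⟨x, hx, univ, isOpen_univ, eq_singleton_iff_unique_mem.2 ⟨⟨trivial, hx⟩,
      fun _ _ => Subsingleton.elim _ _⟩⟩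
  | m + 1, S, hS => by
    have hpi : univ.pi S =
        (Fin.consEquiv fun _ => X).symm ⁻¹' (S 0 ×ˢ univ.pi (S ∘ Fin.succ)) := by
      ext z
      simp [Fin.forall_fin_succ, Fin.consEquiv, Fin.tail]
    rw [hpi]
    exact ((hS 0).prod (univ_pi fun i => hS i.succ)).preimage
      ((continuous_apply 0).prodMk (continuous_pi fun i => continuous_apply i.succ))
      (Fin.consEquiv _).symm.injective

end Scattered

section Countable

variable {X ι : Type*}

def CountablyCovered (U : ι → Set X) (S : Set X) : Prop :=
  ∃ s : Set ι, s.Countable ∧ S ⊆ ⋃ i ∈ s, U i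

variable {U : ι → Set X}

theorem CountablyCovered.mono {S T : Set X} (hST : S ⊆ T) (hT : CountablyCovered U T) :
    CountablyCovered U S :=
  let ⟨s, hs, hTs⟩ := hT
  ⟨s, hs, hST.trans hTs⟩

theorem countablyCovered_of_subset {S : Set X} {i : ι} (hS : S ⊆ U i) : CountablyCovered U S :=
  ⟨{i}, countable_singleton i, by simpa using hS⟩

theorem countablyCovered_iUnion {κ : Type*} [Countable κ] {S : κ → Set X}
    (hS : ∀ n, CountablyCovered U (S n)) : CountablyCovered U (⋃ n, S n) := by
  choose s hs hSs using hS
  refine ⟨⋃ n, s n, countable_iUnion hs, iUnion_subset fun n => (hSs n).trans ?_⟩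
  exact biUnion_mono (subset_iUnion s n) fun _ _ => subset_rfl

theorem CountablyCovered.union {S T : Set X} (hS : CountablyCovered U S)
    (hT : CountablyCovered U T) : CountablyCovered U (S ∪ T) := by
  rw [union_eq_iUnion]
  exact countablyCovered_iUnion (Bool.forall_bool.2 ⟨hT, hS⟩)

variable [TopologicalSpace X]

theorem IsCompact.countablyCovered {K : Set X} (hK : IsCompact K)
    (h : ∀ x ∈ K, ∃ t ∈ 𝓝[K] x, CountablyCovered U t) : CountablyCovered U K :=
  hK.induction_on ⟨∅, countable_empty, empty_subset _⟩ (fun _ _ hst ht => ht.mono hst)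
    (fun _ _ hs ht => hs.union ht) h

theorem IsCompact.countablyCovered_of_isGδ [RegularSpace X] {K : Set X} (hK : IsCompact K)
    (hKs : IsScatteredSet K) (hU : ∀ i, IsGδ (U i)) (hcov : K ⊆ ⋃ i, U i) :
    CountablyCovered U K := by
  by_contra hKU
  set P := {x ∈ K | ∀ t ∈ 𝓝[K] x, ¬CountablyCovered U t}
  have hP : P.Nonempty := by
    by_contra! hP
    refine hKU (hK.countablyCovered fun x hx => ?_)
    by_contra! h
    exact hP.subset ⟨hx, h⟩
  obtain ⟨p, hpP, V, hV, hVP⟩ := hKs P (fun x hx => hx.1) hP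
  rw [eq_singleton_iff_unique_mem] at hVP
  obtain ⟨i, hpi⟩ := mem_iUnion.1 (hcov hpP.1)
  obtain ⟨W, hW, hUW⟩ := (hU i).eq_iInter_nat
  obtain ⟨C, hC, hCcl, hCV⟩ := exists_mem_nhds_isClosed_subset (hV.mem_nhds hVP.1.1)
  -- `C ⊆ V` meets `P` only in `p ∈ U i ⊆ W n`, so these compact pieces contain no point of `P`.
  have hpiece : ∀ n, CountablyCovered U ((K ∩ C) \ W n) := fun n =>
    ((hK.inter_right hCcl).diff (hW n)).countablyCovered fun x ⟨⟨hxK, hxC⟩, hxW⟩ => by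
      have hxP : x ∉ P := fun hxP => by
        rw [hVP.2 x ⟨hCV hxC, hxP⟩] at hxW
        exact hxW (mem_iInter.1 (hUW ▸ hpi) n)
      simp only [P, mem_ofPred_eq, not_and, not_forall, not_not] at hxP
      obtain ⟨t, ht, htU⟩ := hxP hxK
      exact ⟨t, nhdsWithin_mono x (sdiff_subset.trans inter_subset_left) ht, htU⟩
  have hKC : K ∩ C ⊆ U i ∪ ⋃ n, (K ∩ C) \ W n := fun x hx => by
    by_cases hxU : x ∈ U i
    · exact Or.inl hxU
    · rw [hUW, mem_iInter, not_forall] at hxU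
      obtain ⟨n, hn⟩ := hxU
      exact Or.inr (mem_iUnion.2 ⟨n, hx, hn⟩)
  exact hpP.2 _ (inter_mem_nhdsWithin K hC)
    ((countablyCovered_of_subset subset_rfl).union (countablyCovered_iUnion hpiece) |>.mono hKC)

theorem countablyCovered_univ_of_isGδ [RegularSpace X] {κ : Type*} [Countable κ]
    {K : κ → Set X} (hK : ∀ n, IsCompact (K n)) (hKs : ∀ n, IsScatteredSet (K n))
    (hcover : ⋃ n, K n = univ) (hU : ∀ i, IsGδ (U i)) (hUcov : ⋃ i, U i = univ) :
    CountablyCovered U univ := by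
  rw [← hcover]
  exact countablyCovered_iUnion fun n =>
    (hK n).countablyCovered_of_isGδ (hKs n) hU (hUcov ▸ subset_univ _)

end Countable

section Dominating

variable {X : Type*} [TopologicalSpace X] [RegularSpace X] [Nonempty X] {κ : Type*} [Countable κ]
  {K : κ → Set X}

theorem exists_seq_dominating (hK : ∀ n, IsCompact (K n)) (hKs : ∀ n, IsScatteredSet (K n))
    (hcover : ⋃ n, K n = univ) {ι : Type*} [Countable ι] {V : ι → Set X}
    (hV : ∀ i, IsOpen (V i)) : ∃ d : ℕ → X, ∀ x, ∃ j, ∀ i, d j ∈ V i → x ∈ V i := by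
  let G : X → Set X := fun y => ⋂ i ∈ {i | y ∈ V i}, V i
  obtain ⟨s, hs, hsG⟩ := countablyCovered_univ_of_isGδ hK hKs hcover (U := G)
    (fun y => .biInter_of_isOpen (to_countable _) fun i _ => hV i)
    (eq_univ_of_forall fun x => mem_iUnion.2 ⟨x, mem_iInter₂.2 fun _ hi => hi⟩)
  obtain ⟨d, hd⟩ := countable_iff_exists_subset_range.1 hs
  refine ⟨d, fun x => ?_⟩
  obtain ⟨y, hy, hxy⟩ := mem_iUnion₂.1 (hsG (mem_univ x))
  obtain ⟨j, rfl⟩ := hd hy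
  exact ⟨j, fun i hi => mem_iInter₂.1 hxy i hi⟩

end Dominating

namespace Cp

variable {X : Type*} [TopologicalSpace X]

theorem mem_closure_iff {A : Set (Cp X)} {g : Cp X} :
    g ∈ closure A ↔
      ∀ I : Set X, I.Finite → ∀ n : ℕ, ∃ f ∈ A, ∀ x ∈ I, dist (f.1 x) (g.1 x) < 1 / (n + 1) := by
  have hbasis : (𝓝 g.1).HasBasis (fun In : Set X × ℕ => In.1.Finite ∧ True)
      fun In => In.1.pi fun x => Metric.ball (g.1 x) (1 / (In.2 + 1)) := by
    rw [nhds_pi]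
    refine hasBasis_pi_same_index (fun x => Metric.nhds_basis_ball_inv_nat_succ) ?_
    intro I k hI _
    obtain ⟨N, hN⟩ := (hI.image k).bddAbove
    refine ⟨N, trivial, fun x hx => Metric.ball_subset_ball ?_⟩
    exact Nat.one_div_le_one_div (hN (mem_image_of_mem k hx))
  refine closure_subtype.trans ((mem_closure_iff_nhds_basis hbasis).trans ?_)
  simp only [Prod.forall, and_true, Set.mem_pi, Metric.mem_ball]
  refine ⟨fun h I hI n => ?_, fun h I n hI => ?_⟩
  · obtain ⟨_, ⟨f, hf, rfl⟩, hfI⟩ := h I n hI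
    exact ⟨f, hf, hfI⟩
  · obtain ⟨f, hf, hfI⟩ := h I hI n
    exact ⟨f.1, ⟨f, hf, rfl⟩, hfI⟩

theorem tendsto_nhds_iff {α : Type*} {l : Filter α} {f : α → Cp X} {g : Cp X} :
    Tendsto f l (𝓝 g) ↔ ∀ x, Tendsto (fun a => (f a).1 x) l (𝓝 (g.1 x)) :=
  tendsto_subtype_rng.trans tendsto_pi_nhds

section

variable [RegularSpace X] {κ : Type*} [Countable κ] {K : κ → Set X}

theorem exists_countable_subset_mem_closure (hK : ∀ n, IsCompact (K n))
    (hKs : ∀ n, IsScatteredSet (K n)) (hcover : ⋃ n, K n = univ) {A : Set (Cp X)} {g : Cp X}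
    (hg : g ∈ closure A) : ∃ B ⊆ A, B.Countable ∧ g ∈ closure B := by
  have hsub : ∀ m n : ℕ, ∃ s : Set A, s.Countable ∧
      ∀ z : Fin m → X, ∃ f ∈ s, ∀ i, dist ((f : Cp X).1 (z i)) (g.1 (z i)) < 1 / (n + 1) := by
    intro m n
    let O : A → Set (Fin m → X) := fun f =>
      ⋂ i, {z | dist ((f : Cp X).1 (z i)) (g.1 (z i)) < 1 / (n + 1)}
    have hO : ∀ f, IsGδ (O f) := fun f =>
      (isOpen_iInter_of_finite fun i => isOpen_lt
        (((f : Cp X).2.comp (continuous_apply i)).dist (g.2.comp (continuous_apply i)))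
        continuous_const).isGδ
    have hOcov : ⋃ f, O f = univ := eq_univ_of_forall fun z => by
      obtain ⟨f, hf, hfz⟩ := mem_closure_iff.1 hg (range z) (finite_range z) n
      exact mem_iUnion.2 ⟨⟨f, hf⟩, mem_iInter.2 fun i => hfz _ (mem_range_self i)⟩
    have hboxes : ⋃ v : Fin m → κ, univ.pi (fun i => K (v i)) = univ := by
      rw [iUnion_univ_pi, hcover, pi_univ]
    obtain ⟨s, hs, hsO⟩ := countablyCovered_univ_of_isGδ
      (fun v : Fin m → κ => isCompact_univ_pi fun i => hK (v i))
      (fun v => IsScatteredSet.univ_pi fun i => hKs (v i)) hboxes hO hOcov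
    refine ⟨s, hs, fun z => ?_⟩
    obtain ⟨f, hf, hfz⟩ := mem_iUnion₂.1 (hsO (mem_univ z))
    exact ⟨f, hf, fun i => mem_iInter.1 hfz i⟩
  choose s hs hsA using hsub
  refine ⟨⋃ m, ⋃ n, Subtype.val '' s m n, ?_, ?_, mem_closure_iff.2 fun I hI n => ?_⟩
  · simp only [iUnion_subset_iff]
    rintro m n _ ⟨f, -, rfl⟩
    exact f.2
  · exact countable_iUnion fun m => countable_iUnion fun n => (hs m n).image _
  · obtain ⟨m, z, rfl⟩ := hI.fin_embedding
    obtain ⟨f, hf, hfz⟩ := hsA m n z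
    exact ⟨f, mem_iUnion₂.2 ⟨m, n, mem_image_of_mem _ hf⟩, forall_mem_range.2 hfz⟩

theorem exists_seq_tendsto_of_countable [Nonempty X] (hK : ∀ n, IsCompact (K n))
    (hKs : ∀ n, IsScatteredSet (K n)) (hcover : ⋃ n, K n = univ) {B : Set (Cp X)}
    (hB : B.Countable) {g : Cp X} (hg : g ∈ closure B) :
    ∃ f : ℕ → Cp X, (∀ n, f n ∈ B) ∧ Tendsto f atTop (𝓝 g) := by
  have := hB.to_subtype
  let V : B × ℕ → Set X := fun p => {x | dist (p.1.1.1 x) (g.1 x) < 1 / (p.2 + 1)}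
  obtain ⟨d, hd⟩ := exists_seq_dominating hK hKs hcover (V := V)
    fun p => isOpen_lt (p.1.1.2.dist g.2) continuous_const
  have happrox : ∀ n, ∃ f ∈ B, ∀ j ≤ n, dist (f.1 (d j)) (g.1 (d j)) < 1 / (n + 1) := by
    intro n
    obtain ⟨f, hf, hfd⟩ := mem_closure_iff.1 hg (d '' Iic n) ((finite_Iic n).image d) n
    exact ⟨f, hf, fun j hj => hfd _ (mem_image_of_mem d hj)⟩
  choose f hfB hfd using happrox
  refine ⟨f, hfB, tendsto_nhds_iff.2 fun x => ?_⟩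
  obtain ⟨j, hj⟩ := hd x
  have hclose : ∀ n ≥ j, dist ((f n).1 x) (g.1 x) < 1 / (n + 1) := fun n hn =>
    hj (⟨f n, hfB n⟩, n) (hfd n j hn)
  exact tendsto_iff_dist_tendsto_zero.2 <|
    squeeze_zero' (Eventually.of_forall fun _ => dist_nonneg)
      (eventually_atTop.2 ⟨j, fun n hn => (hclose n hn).le⟩)
      tendsto_one_div_add_atTop_nhds_zero_nat

end

end Cp

theorem stmt8 {X : Type*} [TopologicalSpace X] [T35Space X]
    (K : ℕ → Set X) (hKcomp : ∀ n, IsCompact (K n)) (hKscat : ∀ n, IsScatteredSet (K n))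
    (hcover : ⋃ n, K n = Set.univ) :
    FrechetUrysohnSpace (Cp X) := by
  rcases isEmpty_or_nonempty X with hX | hX
  · have : Subsingleton (Cp X) := ⟨fun f g => Subtype.ext (funext isEmptyElim)⟩
    infer_instance
  refine ⟨fun A g hg => ?_⟩
  obtain ⟨B, hBA, hB, hgB⟩ := Cp.exists_countable_subset_mem_closure hKcomp hKscat hcover hg
  obtain ⟨f, hfB, hf⟩ := Cp.exists_seq_tendsto_of_countable hKcomp hKscat hcover hB hgB
  exact ⟨f, fun n => hBA (hfB n), hf⟩
end

section
/- A compact Hausdorff space X is scattered if and only if there is no continuous surjection from X onto the interval [0,1]. -/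
/-!
If `X` is scattered and `f : X → [0, 1]` is onto, Zorn's lemma gives a minimal closed `K` with
`f '' K = [0, 1]`. An isolated point `x` of `K`, say `U ∩ K = {x}`, is then the only preimage in
`K` of some value: minimality forbids `f '' (K \ U) = [0, 1]`, so the complement of the compact set
`f '' (K \ U)` is the open singleton `{f x}`, which is absurd in the connected interval.

Conversely, a non-scattered space contains a nonempty perfect set, and splitting perfect sets
repeatedly yields a Cantor scheme of closed sets. Grouping its cells by their last digit gives
pairs `A n 0, A n 1` of disjoint closed sets all of whose branches `⋂ n, A n (σ n)` are nonempty.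
If `gₙ` is an Urysohn function that is `0` on `A n 0` and `1` on `A n 1`, then `∑ gₙ / 2 ^ (n + 1)`
attains every binary expansion, hence every point of `[0, 1]`.
-/

open Filter Topology

open Set Function PiNat

theorem CantorScheme.Antitone.disjoint_of_length_eq {α β : Type*} {A : List β → Set α}
    (hanti : CantorScheme.Antitone A) (hdisj : CantorScheme.Disjoint A) {l l' : List β}
    (hlen : l.length = l'.length) (hne : l ≠ l') : Disjoint (A l) (A l') := by
  induction l generalizing l' with
  | nil => exact absurd (List.eq_nil_of_length_eq_zero hlen.symm).symm hne
  | cons a l ih =>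
    obtain ⟨b, l', rfl⟩ := List.exists_cons_of_length_eq_add_one hlen.symm
    by_cases hl : l = l'
    · subst hl
      exact hdisj l fun hab => hne (hab ▸ rfl)
    · exact (ih (Nat.succ_injective hlen) hl).mono (hanti l a) (hanti l' b)

section

variable {X Y : Type*} [TopologicalSpace X] [TopologicalSpace Y]

theorem exists_minimal_isClosed_image_eq_univ [CompactSpace X] [T1Space Y] {f : X → Y}
    (hf : Continuous f) (hsurj : Surjective f) :
    ∃ K, Minimal (fun K : Set X => IsClosed K ∧ f '' K = univ) K := by
  suffices hchain : ∀ c ⊆ {K : Set X | IsClosed K ∧ f '' K = univ}, IsChain (· ⊆ ·) c →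
      c.Nonempty → ∃ L ∈ {K : Set X | IsClosed K ∧ f '' K = univ}, ∀ K ∈ c, L ⊆ K by
    obtain ⟨K, -, hK⟩ := zorn_superset_nonempty _ hchain univ
      ⟨isClosed_univ, image_univ_of_surjective hsurj⟩
    exact ⟨K, hK⟩
  intro c hc hchain hne
  refine ⟨⋂₀ c, ⟨isClosed_sInter fun K hK => (hc hK).1, eq_univ_of_forall fun y => ?_⟩,
    fun K hK => sInter_subset_of_mem hK⟩
  have : Nonempty c := hne.to_subtype
  replace hchain : IsChain (· ⊇ ·) c := hchain.symm
  have hfiber : ∀ K : c, IsClosed ((K : Set X) ∩ f ⁻¹' {y}) := fun K =>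
    (hc K.2).1.inter (isClosed_singleton.preimage hf)
  obtain ⟨x, hx⟩ := IsCompact.nonempty_iInter_of_directed_nonempty_isCompact_isClosed
    (fun K : c => (K : Set X) ∩ f ⁻¹' {y})
    ((directedOn_iff_directed.mp hchain.directedOn).mono_comp
      (g := (· ∩ f ⁻¹' {y})) _ fun _ _ => inter_subset_inter_left _)
    (fun K => by
      obtain ⟨x, hxK, rfl⟩ := (hc K.2).2.symm ▸ mem_univ y
      exact ⟨x, hxK, rfl⟩)
    (fun K => (hfiber K).isCompact) hfiber
  simp only [mem_iInter, mem_inter_iff, mem_preimage, mem_singleton_iff] at hx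
  exact ⟨x, mem_sInter.2 fun K hK => (hx ⟨K, hK⟩).1, (hx (Classical.arbitrary c)).2⟩

theorem exists_isOpen_singleton_of_isScatteredSet [CompactSpace X] [T2Space Y] [Nonempty Y]
    (hX : IsScatteredSet (univ : Set X)) {f : X → Y} (hf : Continuous f) (hsurj : Surjective f) :
    ∃ y, IsOpen ({y} : Set Y) := by
  obtain ⟨K, ⟨hKcl, hKf⟩, hKmin⟩ := exists_minimal_isClosed_image_eq_univ hf hsurj
  have hKne : K.Nonempty := image_nonempty.1 (hKf ▸ univ_nonempty)
  obtain ⟨x, hxK, U, hU, hUK⟩ := hX K (subset_univ K) hKne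
  have hclosed : IsClosed (K \ U) := hKcl.sdiff hU
  have hproper : f '' (K \ U) ≠ univ := fun h =>
    (hKmin ⟨hclosed, h⟩ sdiff_subset hxK).2 (hUK.symm ▸ mem_singleton x : x ∈ U ∩ K).1
  have hsub : (f '' (K \ U))ᶜ ⊆ {f x} := by
    intro z hz
    obtain ⟨w, hwK, rfl⟩ := hKf.symm ▸ mem_univ z
    have hwU : w ∈ U ∩ K := ⟨by_contra fun hwU => hz ⟨w, ⟨hwK, hwU⟩, rfl⟩, hwK⟩
    rw [hUK] at hwU
    exact congrArg f hwU
  obtain ⟨y, hy⟩ := (ne_univ_iff_exists_notMem _).1 hproper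
  refine ⟨f x, ?_⟩
  rw [← Subset.antisymm hsub (singleton_subset_iff.2 (hsub hy ▸ hy))]
  exact ((hclosed.isCompact.image hf).isClosed).isOpen_compl

theorem exists_perfect_of_not_isScatteredSet {S : Set X} (hS : ¬ IsScatteredSet S) :
    ∃ K : Set X, Perfect K ∧ K.Nonempty := by
  simp only [IsScatteredSet, not_forall, not_exists, not_and] at hS
  obtain ⟨T, -, hTne, hT⟩ := hS
  refine ⟨closure T, Preperfect.perfect_closure ?_, hTne.closure⟩
  rw [preperfect_iff_nhds]
  intro x hxT U hU
  obtain ⟨V, hVU, hV, hxV⟩ := mem_nhds_iff.1 hU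
  have hxVT : x ∈ V ∩ T := ⟨hxV, hxT⟩
  obtain ⟨y, hy, hyx⟩ := ((nontrivial_iff_ne_singleton hxVT).2 (hT x hxT V hV)).exists_ne x
  exact ⟨y, ⟨hVU hy.1, hy.2⟩, hyx⟩

theorem Perfect.exists_cantorScheme [T25Space X] {K : Set X} (hK : Perfect K) (hne : K.Nonempty) :
    ∃ F : List (Fin 2) → Set X, (∀ l, IsClosed (F l) ∧ (F l).Nonempty) ∧
      CantorScheme.Antitone F ∧ CantorScheme.Disjoint F := by
  let P := {C : Set X // Perfect C ∧ C.Nonempty}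
  have hsplit : ∀ C : P, ∃ D : Fin 2 → P, (∀ i, (D i : Set X) ⊆ C) ∧
      Disjoint (D 0 : Set X) (D 1) := by
    rintro ⟨C, hC, hCne⟩
    obtain ⟨C₀, C₁, ⟨h₀, h₀ne, h₀C⟩, ⟨h₁, h₁ne, h₁C⟩, hdisj⟩ := hC.splitting hCne
    exact ⟨![⟨C₀, h₀, h₀ne⟩, ⟨C₁, h₁, h₁ne⟩], fun i => by fin_cases i <;> assumption, hdisj⟩
  choose D hDsub hDdisj using hsplit
  let F : List (Fin 2) → P := fun l => l.foldr (fun i C => D C i) ⟨K, hK, hne⟩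
  refine ⟨fun l => F l, fun l => ⟨(F l).2.1.closed, (F l).2.2⟩, fun l i => hDsub (F l) i,
    fun l i j hij => ?_⟩
  fin_cases i <;> fin_cases j
  · exact absurd rfl hij
  · exact hDdisj (F l)
  · exact (hDdisj (F l)).symm
  · exact absurd rfl hij

theorem exists_disjoint_closed_pairs_of_perfect [CompactSpace X] [T25Space X] {K : Set X}
    (hK : Perfect K) (hne : K.Nonempty) :
    ∃ A : ℕ → Fin 2 → Set X, (∀ n i, IsClosed (A n i)) ∧ (∀ n, Disjoint (A n 0) (A n 1)) ∧
      ∀ σ : ℕ → Fin 2, (⋂ n, A n (σ n)).Nonempty := by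
  obtain ⟨F, hF, hanti, hdisj⟩ := hK.exists_cantorScheme hne
  -- `A n i` gathers the cells of depth `n + 1` whose `n`-th digit is `i`: lists store the newest
  -- digit first, as in `PiNat.res σ (n + 1) = σ n :: res σ n`.
  refine ⟨fun n i => ⋃ l ∈ {l : List (Fin 2) | l.length = n}, F (i :: l),
    fun n i => (List.finite_length_eq (Fin 2) n).isClosed_biUnion fun l _ => (hF _).1,
    fun n => ?_, fun σ => ?_⟩
  · simp only [disjoint_iUnion_left, disjoint_iUnion_right]
    intro l hl l' hl'
    exact hanti.disjoint_of_length_eq hdisj (by simp_all) (by simp)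
  · obtain ⟨x, hx⟩ := IsCompact.nonempty_iInter_of_sequence_nonempty_isCompact_isClosed
      (fun n => F (res σ n)) (fun n => res_succ σ n ▸ hanti _ _) (fun n => (hF _).2)
      (hF _).1.isCompact (fun n => (hF _).1)
    refine ⟨x, mem_iInter.2 fun n => mem_biUnion (res_length σ n) ?_⟩
    rw [← res_succ]
    exact mem_iInter.1 hx (n + 1)

theorem exists_continuous_surjective_Icc_of_Icc_subset_range {f : X → ℝ} (hf : Continuous f)
    {a b : ℝ} (hab : a ≤ b) (hrange : Icc a b ⊆ range f) :
    ∃ g : X → Icc a b, Continuous g ∧ Surjective g := by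
  refine ⟨projIcc a b hab ∘ f, continuous_projIcc.comp hf, fun y => ?_⟩
  obtain ⟨x, hx⟩ := hrange y.2
  exact ⟨x, by simp [hx]⟩

theorem exists_continuous_surjective_Icc_of_disjoint_closed_pairs [NormalSpace X]
    (A : ℕ → Fin 2 → Set X) (hA : ∀ n i, IsClosed (A n i)) (hdisj : ∀ n, Disjoint (A n 0) (A n 1))
    (hbranch : ∀ σ : ℕ → Fin 2, (⋂ n, A n (σ n)).Nonempty) :
    ∃ f : X → Icc (0 : ℝ) 1, Continuous f ∧ Surjective f := by
  choose g hg0 hg1 hg01 using fun n =>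
    exists_continuous_zero_one_of_isClosed (hA n 0) (hA n 1) (hdisj n)
  have hdigits : ∀ σ : ℕ → Fin 2, ∃ x, ∀ n, g n x = σ n := by
    intro σ
    obtain ⟨x, hx⟩ := hbranch σ
    refine ⟨x, fun n => ?_⟩
    have hxn := mem_iInter.1 hx n
    generalize σ n = i at hxn
    fin_cases i
    · simpa using hg0 n hxn
    · simpa using hg1 n hxn
  have hcont : Continuous fun x => ∑' n, g n x * ((2 : ℝ) ^ (n + 1))⁻¹ := by
    refine continuous_tsum (u := fun n => ((2 : ℝ) ^ (n + 1))⁻¹) (by fun_prop) ?_ fun n x => ?_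
    · simpa [pow_succ] using summable_geometric_two.mul_left 2⁻¹
    · have := hg01 n x
      rw [norm_mul, Real.norm_of_nonneg this.1, Real.norm_of_nonneg (by positivity)]
      exact mul_le_of_le_one_left (by positivity) this.2
  refine exists_continuous_surjective_Icc_of_Icc_subset_range hcont zero_le_one fun y hy => ?_
  obtain ⟨σ, -, rfl⟩ := Real.ofDigits_SurjOn (b := 2) one_lt_two hy
  obtain ⟨x, hx⟩ := hdigits σ
  exact ⟨x, by simp [Real.ofDigits, Real.ofDigitsTerm, hx]⟩

end

theorem stmt10 {X : Type*} [TopologicalSpace X] [CompactSpace X] [T2Space X] :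
    IsScatteredSet (Set.univ : Set X) ↔
      ¬ ∃ f : X → Set.Icc (0 : ℝ) 1, Continuous f ∧ Function.Surjective f := by
  constructor
  · rintro hX ⟨f, hf, hsurj⟩
    obtain ⟨y, hy⟩ := exists_isOpen_singleton_of_isScatteredSet hX hf hsurj
    exact not_isOpen_singleton y hy
  · contrapose!
    intro hX
    obtain ⟨K, hK, hKne⟩ := exists_perfect_of_not_isScatteredSet hX
    obtain ⟨A, hA, hdisj, hbranch⟩ := exists_disjoint_closed_pairs_of_perfect hK hKne
    exact exists_continuous_surjective_Icc_of_disjoint_closed_pairs A hA hdisj hbranch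
end

section
/- Let E be an infinite-dimensional Banach space. Then E equipped with the weak topology is not Fréchet–Urysohn. -/
/-!
Suppose the weak topology of `E` were Fréchet–Urysohn. Every weak neighbourhood of `0` contains a
nonzero vector subspace, so for each `m` there is a weakly null sequence `σ m` of norm at least
`m`. Translate the `m`-th row by `t m`, where `t` is a nonzero sequence tending to `0`. Then `0`
lies in the weak closure of all translated rows, so some sequence taken from them tends weakly to
`0`. Each row accumulates only at its own point `t m ≠ 0`, so that sequence visits rows of
arbitrarily large index and is norm-unbounded, contradicting the uniform boundedness principle.
-/

open Filter Topology

theorem FrechetUrysohnSpace.exists_tendsto_diagonal {X : Type*} [TopologicalSpace X]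
    [FrechetUrysohnSpace X] [T2Space X] {x : X} {x' : ℕ → X} {y : ℕ → ℕ → X}
    (hx' : Tendsto x' atTop (𝓝 x)) (hy : ∀ m, Tendsto (y m) atTop (𝓝 (x' m)))
    (hx'_ne : ∀ m, x' m ≠ x) (hy_ne : ∀ m k, y m k ≠ x) :
    ∃ m k : ℕ → ℕ, Tendsto m atTop atTop ∧ Tendsto (fun j ↦ y (m j) (k j)) atTop (𝓝 x) := by
  have hx : x ∈ closure (Set.range (Function.uncurry y)) := by
    rw [← closure_closure]
    exact mem_closure_of_tendsto hx' <| .of_forall fun m ↦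
      mem_closure_of_tendsto (hy m) <| .of_forall fun k ↦ Set.mem_range_self (m, k)
  obtain ⟨c, hc_mem, hc⟩ := mem_closure_iff_seq_limit.mp hx
  choose mk hmk using hc_mem
  obtain rfl : c = Function.uncurry y ∘ mk := funext fun j ↦ (hmk j).symm
  refine ⟨fun j ↦ (mk j).1, fun j ↦ (mk j).2, ?_, hc⟩
  have hrow : ∀ m₀, ∀ᶠ j in atTop, (mk j).1 ≠ m₀ := by
    intro m₀
    have hK := (hy m₀).isCompact_insert_range.isClosed
    have hxK : x ∉ insert (x' m₀) (Set.range (y m₀)) := by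
      rintro (h | ⟨k, hk⟩)
      exacts [hx'_ne m₀ h.symm, hy_ne m₀ k hk]
    filter_upwards [hc.eventually (hK.isOpen_compl.mem_nhds hxK)] with j hj hjm
    exact hj (hjm ▸ Or.inr ⟨(mk j).2, rfl⟩)
  refine tendsto_atTop.mpr fun N ↦ ?_
  filter_upwards [(Finset.range N).eventually_all.mpr fun m₀ _ ↦ hrow m₀] with j hj
  by_contra! hlt
  exact hj _ (Finset.mem_range.mpr hlt) rfl

theorem exists_ne_zero_forall_apply_eq_zero {K V ι : Type*} [Field K] [AddCommGroup V]
    [Module K V] [Finite ι] (hV : ¬ FiniteDimensional K V) (f : ι → V →ₗ[K] K) :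
    ∃ y : V, y ≠ 0 ∧ ∀ i, f i y = 0 := by
  by_contra! H
  refine hV (Module.Finite.of_injective (LinearMap.pi f) ?_)
  rw [← LinearMap.ker_eq_bot, LinearMap.ker_eq_bot']
  intro y hy
  by_contra hy0
  obtain ⟨i, hi⟩ := H y hy0
  exact hi (congrFun hy i)

theorem WeakSpace.zero_mem_closure_norm_ge {E : Type*} [NormedAddCommGroup E] [NormedSpace ℝ E]
    (hE : ¬ FiniteDimensional ℝ E) (R : ℝ) :
    (0 : WeakSpace ℝ E) ∈ closure {w | R ≤ ‖(toWeakSpace ℝ E).symm w‖} := by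
  refine mem_closure_iff_nhds_basis (LinearMap.hasBasis_weakBilin _) |>.mpr fun U hU ↦ ?_
  obtain ⟨s, r, hr, rfl⟩ := (SeminormFamily.basisSets_iff _).mp hU
  obtain ⟨y, hy0, hy⟩ := exists_ne_zero_forall_apply_eq_zero hE
    fun f : s ↦ ((f : StrongDual ℝ E) : E →ₗ[ℝ] ℝ)
  refine ⟨toWeakSpace ℝ E ((R / ‖y‖) • y), ?_, ?_⟩
  · show R ≤ ‖(toWeakSpace ℝ E).symm (toWeakSpace ℝ E _)‖
    rw [LinearEquiv.symm_apply_apply, norm_smul, norm_div, norm_norm,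
      div_mul_cancel₀ _ (norm_ne_zero_iff.mpr hy0), Real.norm_eq_abs]
    exact le_abs_self R
  · refine (Seminorm.mem_ball_zero _).mpr <|
      (Seminorm.finset_sup_apply_le le_rfl fun f hf ↦ ?_).trans_lt hr
    have hfy : f y = 0 := hy ⟨f, hf⟩
    show ‖f ((R / ‖y‖) • y)‖ ≤ 0
    rw [map_smul, hfy, smul_zero, norm_zero]

theorem WeakSpace.exists_norm_le_of_tendsto {𝕜 E : Type*} [RCLike 𝕜] [NormedAddCommGroup E]
    [NormedSpace 𝕜 E] {u : ℕ → WeakSpace 𝕜 E} {x : WeakSpace 𝕜 E} (hu : Tendsto u atTop (𝓝 x)) :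
    ∃ C, ∀ n, ‖(toWeakSpace 𝕜 E).symm (u n)‖ ≤ C := by
  have hbdd (f : StrongDual 𝕜 E) :
      ∃ C, ∀ n, ‖NormedSpace.inclusionInDoubleDual 𝕜 E ((toWeakSpace 𝕜 E).symm (u n)) f‖ ≤ C := by
    obtain ⟨C, hC⟩ := (((WeakBilin.eval_continuous _ f).tendsto x).comp hu).norm.bddAbove_range
    exact ⟨C, fun n ↦ hC ⟨n, rfl⟩⟩
  obtain ⟨C, hC⟩ := banach_steinhaus hbdd
  exact ⟨C, fun n ↦ (NormedSpace.inclusionInDoubleDualLi 𝕜).norm_map (E := E) _ ▸ hC n⟩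

theorem stmt12_general (E : Type*) [NormedAddCommGroup E] [NormedSpace ℝ E]
    (h : ¬ FiniteDimensional ℝ E) :
    ¬ FrechetUrysohnSpace (WeakSpace ℝ E) := by
  intro _
  set e := toWeakSpace ℝ E
  have : Nontrivial E := not_subsingleton_iff_nontrivial.mp fun _ ↦ h inferInstance
  obtain ⟨v, hv⟩ := exists_ne (0 : E)
  set t : ℕ → WeakSpace ℝ E := fun m ↦ ((m : ℝ) + 1)⁻¹ • e v
  have ht : Tendsto t atTop (𝓝 0) := by
    simpa [t] using (tendsto_one_div_add_atTop_nhds_zero_nat (𝕜 := ℝ)).smul_const (e v)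
  have ht_ne m : t m ≠ 0 := smul_ne_zero (by positivity) (e.map_ne_zero_iff.mpr hv)
  choose σ hσ_norm hσ using fun m : ℕ ↦ mem_closure_iff_seq_limit.mp <|
    WeakSpace.zero_mem_closure_norm_ge h ((m : ℝ) + 1 + ‖e.symm (t m)‖)
  have hnorm (m k : ℕ) : (m : ℝ) + 1 ≤ ‖e.symm (t m + σ m k)‖ := by
    have hσmk : (m : ℝ) + 1 + ‖e.symm (t m)‖ ≤ ‖e.symm (σ m k)‖ := hσ_norm m k
    rw [map_add]
    linarith [norm_le_add_norm_add' (e.symm (t m)) (e.symm (σ m k))]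
  obtain ⟨m, k, hm, hmk⟩ := FrechetUrysohnSpace.exists_tendsto_diagonal ht
    (fun m ↦ by simpa using (hσ m).const_add (t m)) ht_ne
    fun m k h0 ↦ (Nat.cast_add_one_pos m).not_ge (by simpa [h0] using hnorm m k)
  obtain ⟨C, hC⟩ := WeakSpace.exists_norm_le_of_tendsto hmk
  obtain ⟨j, hj⟩ := (tendsto_atTop.mp hm ⌈C⌉₊).exists
  linarith [hnorm (m j) (k j), hC j, Nat.ceil_le.mp hj]

theorem stmt12 (E : Type*) [NormedAddCommGroup E] [NormedSpace ℝ E] [CompleteSpace E]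
    (h : ¬ FiniteDimensional ℝ E) :
    ¬ FrechetUrysohnSpace (WeakSpace ℝ E) :=
  stmt12_general E h
end

section
/- Let E be a reflexive Banach space and X an infinite Tychonoff space. Then C_p(X) and E_w are not homeomorphic. -/
open Filter Topology

/-!
Closed balls of a reflexive space are weakly compact (Banach–Alaoglu in the bidual), so `E_w` is
σ-compact, and it remains to see that `C_p(X)` is not. If it were, Baire's theorem in `X →ᵇ ℝ`
would put a sup-norm ball `{g : |g - f₀| ≤ r}` inside one compact piece `K`. Since `K` is
pointwise closed and bump functions make `f₀ + r • 1_{x}` a pointwise limit of that ball, every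
point of `X` is isolated. For discrete infinite `X`, choosing large values along a sequence of
distinct points gives a function outside every compact piece.
-/

open Set
open scoped BoundedContinuousFunction

namespace WeakDual

instance sigmaCompactSpace {𝕜 F : Type*} [NontriviallyNormedField 𝕜] [ProperSpace 𝕜]
    [SeminormedAddCommGroup F] [NormedSpace 𝕜 F] : SigmaCompactSpace (WeakDual 𝕜 F) :=
  SigmaCompactSpace_iff_exists_compact_covering.2
    ⟨fun n => toStrongDual ⁻¹' Metric.closedBall 0 n, fun n => isCompact_closedBall 0 n,
      iUnion_eq_univ_iff.2 fun x =>
        (exists_nat_ge ‖toStrongDual x‖).imp fun _ hn => by simpa using hn⟩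

end WeakDual

theorem NormedSpace.sigmaCompactSpace_weakSpace {𝕜 E : Type*} [RCLike 𝕜] [NormedAddCommGroup E]
    [NormedSpace 𝕜 E] (hrefl : Function.Surjective (inclusionInDoubleDual 𝕜 E)) :
    SigmaCompactSpace (WeakSpace 𝕜 E) :=
  ((isEmbedding_inclusionInDoubleDualWeak 𝕜 E).toHomeomorphOfSurjective
    hrefl).isClosedEmbedding.sigmaCompactSpace

namespace Cp

variable {X : Type*} [TopologicalSpace X]

instance : T2Space (Cp X) :=
  inferInstanceAs (T2Space {f : X → ℝ // Continuous f})

theorem isClosed_image_val {K : Set (Cp X)} (hK : IsCompact K) :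
    IsClosed (Subtype.val '' K : Set (X → ℝ)) :=
  (hK.image continuous_subtype_val).isClosed

theorem exists_isCompact_forall_abs_sub_le_mem [SigmaCompactSpace (Cp X)] :
    ∃ (K : Set (Cp X)) (f₀ : X → ℝ) (r : ℝ), IsCompact K ∧ Continuous f₀ ∧ 0 < r ∧
      ∀ g : Cp X, (∀ x, |g.1 x - f₀ x| ≤ r) → g ∈ K := by
  let Φ : (X →ᵇ ℝ) → Cp X := fun g => ⟨g, g.continuous⟩
  have hΦ : Continuous Φ :=
    (continuous_pi fun x => (continuous_apply x).comp
      BoundedContinuousFunction.continuous_coe).subtype_mk _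
  have hcover : ⋃ n, Φ ⁻¹' compactCovering (Cp X) n = univ :=
    iUnion_eq_univ_iff.2 fun g => exists_mem_compactCovering (Φ g)
  obtain ⟨n, f₀, hf₀⟩ := nonempty_interior_of_iUnion_of_closed
    (fun n => (isCompact_compactCovering (Cp X) n).isClosed.preimage hΦ) hcover
  obtain ⟨ε, hε, hball⟩ := Metric.mem_nhds_iff.1 (mem_interior_iff_mem_nhds.1 hf₀)
  refine ⟨_, f₀, ε / 2, isCompact_compactCovering (Cp X) n, f₀.continuous, by positivity,
    fun g hg => ?_⟩
  let d : X →ᵇ ℝ := .ofNormedAddCommGroup (g.1 - f₀) (g.2.sub f₀.continuous) (ε / 2) hg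
  have hd : ‖d‖ ≤ ε / 2 :=
    BoundedContinuousFunction.norm_ofNormedAddCommGroup_le _ (half_pos hε).le _
  have hΦd : Φ (f₀ + d) = g := Subtype.ext (by ext x; simp [Φ, d])
  exact hΦd ▸ hball (by rw [Metric.mem_ball, dist_eq_norm, add_sub_cancel_left]; linarith)

theorem discreteTopology_of_sigmaCompactSpace [T35Space X] [SigmaCompactSpace (Cp X)] :
    DiscreteTopology X := by
  classical
  obtain ⟨K, f₀, r, hK, hf₀, hr, hball⟩ := exists_isCompact_forall_abs_sub_le_mem (X := X)
  refine discreteTopology_iff_isOpen_singleton.2 fun x => ?_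
  have hclosed (F : Finset X) : IsClosed ((F : Set X) \ {x}) :=
    (F.finite_toSet.subset sdiff_subset).isClosed
  choose c hc hcx hcF using fun F : Finset X =>
    CompletelyRegularSpace.completely_regular x _ (hclosed F) (by simp)
  let g : Finset X → Cp X := fun F => ⟨fun y => f₀ y + r * (1 - c F y), by fun_prop⟩
  let φ : X → ℝ := fun y => f₀ y + r * if y = x then 1 else 0
  have hgφ : Tendsto (fun F => (g F).1) atTop (𝓝 φ) := by
    refine tendsto_pi_nhds.2 fun y => tendsto_const_nhds.congr' ?_
    filter_upwards [eventually_ge_atTop {y}] with F hF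
    have hyF : y ∈ F := hF (Finset.mem_singleton_self y)
    by_cases hy : y = x
    · subst hy; simp [g, φ, hcx]
    · simp [g, φ, hy, hcF F ⟨hyF, hy⟩]
  obtain ⟨φ', -, hφ'⟩ : φ ∈ Subtype.val '' K := (isClosed_image_val hK).mem_of_tendsto hgφ
    (Eventually.of_forall fun F => mem_image_of_mem _ (hball _ fun y => by
      have hcFy := (c F y).2
      simp only [g, add_sub_cancel_left, abs_le, mem_Icc] at hcFy ⊢
      constructor <;> nlinarith))
  have hx : {x} = {y | f₀ y + r / 2 < φ y} := by
    ext y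
    by_cases hy : y = x <;> simp [φ, hy] <;> linarith
  rw [hx, ← hφ']
  exact isOpen_lt (by fun_prop) φ'.2

theorem exists_forall_exists_abs_apply_le [SigmaCompactSpace (Cp X)] (x : ℕ → X) :
    ∃ M : ℕ → ℝ, ∀ f : Cp X, ∃ n, |f.1 (x n)| ≤ M n := by
  choose M hM using fun n => (isCompact_compactCovering (Cp X) n).exists_bound_of_continuousOn
    ((continuous_apply (x n)).comp continuous_subtype_val).continuousOn
  exact ⟨M, fun f => (exists_mem_compactCovering f).imp fun n hn => hM n f hn⟩

theorem not_sigmaCompactSpace_of_discreteTopology [DiscreteTopology X] [Infinite X] :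
    ¬ SigmaCompactSpace (Cp X) := fun _ => by
  let x := Infinite.natEmbedding X
  obtain ⟨M, hM⟩ := exists_forall_exists_abs_apply_le x
  obtain ⟨n, hn⟩ := hM ⟨Function.extend x (fun n => M n + 1) 0, continuous_of_discreteTopology⟩
  replace hn : |Function.extend x (fun n => M n + 1) 0 (x n)| ≤ M n := hn
  rw [x.injective.extend_apply] at hn
  linarith [le_abs_self (M n + 1)]

theorem not_sigmaCompactSpace [T35Space X] [Infinite X] : ¬ SigmaCompactSpace (Cp X) :=
  fun _ =>
    have := discreteTopology_of_sigmaCompactSpace (X := X)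
    not_sigmaCompactSpace_of_discreteTopology ‹_›

end Cp

theorem stmt14_general {X : Type*} [TopologicalSpace X] [T35Space X] [Infinite X]
    (E : Type*) [NormedAddCommGroup E] [NormedSpace ℝ E]
    (hrefl : Function.Surjective (NormedSpace.inclusionInDoubleDual ℝ E)) :
    IsEmpty (Cp X ≃ₜ WeakSpace ℝ E) := by
  have := NormedSpace.sigmaCompactSpace_weakSpace hrefl
  exact ⟨fun e => Cp.not_sigmaCompactSpace e.isClosedEmbedding.sigmaCompactSpace⟩

theorem stmt14 {X : Type*} [TopologicalSpace X] [T35Space X] [Infinite X]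
    (E : Type*) [NormedAddCommGroup E] [NormedSpace ℝ E] [CompleteSpace E]
    (hrefl : Function.Surjective (NormedSpace.inclusionInDoubleDual ℝ E)) :
    IsEmpty (Cp X ≃ₜ WeakSpace ℝ E) :=
  stmt14_general E hrefl
end

section
/- Let E be a separable Banach space with the Schur property. Then E with the weak topology is not homeomorphic to C_p(X) for any uncountable Tychonoff space X; indeed E_w is an ℵ₀-space while C_p(X) is an ℵ₀-space only if X is countable. -/
open Filter Topology

/-!
Countably many functionals separate the points of the separable space `E`, so every weakly
compact `K ⊆ E` is metrizable and each sequence in `K` has a weakly convergent subsequence, which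
converges in norm by the Schur property. Hence weakly compact sets are norm compact, and the finite
unions of members of a countable basis of the norm topology form a countable k-network of `E_w`;
a homeomorphism would transport it to `C_p(X)`.

If `C_p(X)` has a countable k-network `P`, picking one function in each member of `P` gives
countably many continuous functions separating the points of `X`, hence a continuous injection
`Φ` of `X` into a metric space. For `x : X`, the functions `y ↦ tent n (min 1 (dist (Φ x) (Φ y)))`
tend to `0` pointwise, so with `0` they form a compact subset of `{g | g x < 1/2}`. A member of `P`
squeezed between these two sets determines `x`, because for `y ≠ x` one of the functions exceeds
`1/2` at `y`. So `X` injects into `P` and is countable.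
-/

open Set Function TopologicalSpace

def IsKNetwork {α : Type*} [TopologicalSpace α] (P : Set (Set α)) : Prop :=
  ∀ K U : Set α, IsCompact K → IsOpen U → K ⊆ U → ∃ p ∈ P, K ⊆ p ∧ p ⊆ U

def HasCountableKNetwork (α : Type*) [TopologicalSpace α] : Prop :=
  ∃ P : Set (Set α), P.Countable ∧ IsKNetwork P

section KNetwork

variable {α β : Type*} [TopologicalSpace α] [TopologicalSpace β]

theorem HasCountableKNetwork.of_surjective (h : HasCountableKNetwork α) {f : α → β}
    (hf : Continuous f) (hsurj : Surjective f) (hK : ∀ K, IsCompact K → IsCompact (f ⁻¹' K)) :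
    HasCountableKNetwork β := by
  obtain ⟨P, hPc, hP⟩ := h
  refine ⟨image f '' P, hPc.image _, fun K U hKc hU hKU => ?_⟩
  obtain ⟨p, hp, hKp, hpU⟩ :=
    hP _ _ (hK K hKc) (hU.preimage hf) (preimage_mono hKU)
  exact ⟨f '' p, mem_image_of_mem _ hp, (image_preimage_eq K hsurj).symm.subset.trans
    (image_mono hKp), image_subset_iff.2 hpU⟩

theorem hasCountableKNetwork_of_secondCountable [SecondCountableTopology α] :
    HasCountableKNetwork α := by
  refine ⟨sUnion '' {s | s.Finite ∧ s ⊆ countableBasis α},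
    (countable_ofPred_finite_subset (countable_countableBasis α)).image _,
    fun K U hK hU hKU => ?_⟩
  have hcover : K ⊆ ⋃ b ∈ {b ∈ countableBasis α | b ⊆ U}, id b := fun x hx => by
    obtain ⟨b, hb, hxb, hbU⟩ := (isBasis_countableBasis α).exists_subset_of_mem_open (hKU hx) hU
    exact mem_biUnion ⟨hb, hbU⟩ hxb
  obtain ⟨s, hs, hsfin, hKs⟩ := hK.elim_finite_subcover_image
    (fun b hb => isOpen_of_mem_countableBasis hb.1) hcover
  exact ⟨⋃₀ s, ⟨s, ⟨hsfin, fun b hb => (hs hb).1⟩, rfl⟩, by simpa [sUnion_eq_biUnion] using hKs,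
    sUnion_subset fun b hb => (hs hb).2⟩

end KNetwork

theorem SeparatingDual.exists_countable_separating {R V : Type*} [Ring R] [TopologicalSpace R]
    [T1Space R] [AddCommGroup V] [TopologicalSpace V] [Module R V] [SeparatingDual R V]
    [SecondCountableTopology V] :
    ∃ T : Set (StrongDual R V), T.Countable ∧ ∀ x y : V, x ≠ y → ∃ f ∈ T, f x ≠ f y := by
  obtain ⟨T, hTc, hT⟩ := isOpen_iUnion_countable (fun f : StrongDual R V => {x | f x ≠ 0})
    fun f => isOpen_compl_singleton.preimage f.continuous
  refine ⟨T, hTc, fun x y hxy => ?_⟩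
  obtain ⟨f, hf⟩ := SeparatingDual.exists_ne_zero (R := R) (sub_ne_zero.2 hxy)
  have : x - y ∈ ⋃ f ∈ T, {x | f x ≠ 0} := hT ▸ mem_iUnion.2 ⟨f, hf⟩
  obtain ⟨g, hg, hgxy⟩ := mem_iUnion₂.1 this
  exact ⟨g, hg, sub_ne_zero.1 (by simpa using hgxy)⟩

section Weak

variable {𝕜 E : Type*} [NormedField 𝕜] [AddCommGroup E] [TopologicalSpace E] [Module 𝕜 E]

theorem WeakSpace.continuous_dual (f : StrongDual 𝕜 E) : Continuous fun x : WeakSpace 𝕜 E => f x :=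
  WeakBilin.eval_continuous (topDualPairing 𝕜 E).flip f

variable [SeparatingDual 𝕜 E] [SecondCountableTopology E]

theorem WeakSpace.metrizableSpace_of_isCompact {K : Set (WeakSpace 𝕜 E)} (hK : IsCompact K) :
    MetrizableSpace K := by
  have : CompactSpace K := isCompact_iff_compactSpace.mp hK
  obtain ⟨T, hTc, hT⟩ := SeparatingDual.exists_countable_separating (R := 𝕜) (V := E)
  have : Encodable T := hTc.toEncodable
  exact Metric.PiNatEmbed.TopologicalSpace.MetrizableSpace.of_countable_separating
    (fun (f : T) (x : K) => f.1 x.1)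
    (fun f => (WeakSpace.continuous_dual f.1).comp continuous_subtype_val)
    fun x y hxy => by
      obtain ⟨f, hf, hfxy⟩ := hT x.1 y.1 (Subtype.val_injective.ne hxy)
      exact ⟨⟨f, hf⟩, hfxy⟩

end Weak

def HasSchurProperty (E : Type*) [NormedAddCommGroup E] [NormedSpace ℝ E] : Prop :=
  ∀ (x : ℕ → E) (y : E),
    (∀ φ : E →L[ℝ] ℝ, Tendsto (fun n => φ (x n)) atTop (𝓝 (φ y))) → Tendsto x atTop (𝓝 y)

section Schur

variable {E : Type*} [NormedAddCommGroup E] [NormedSpace ℝ E] [SeparableSpace E]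

theorem HasSchurProperty.isCompact_preimage_toWeakSpace (hE : HasSchurProperty E)
    {K : Set (WeakSpace ℝ E)} (hK : IsCompact K) : IsCompact (toWeakSpace ℝ E ⁻¹' K) := by
  have : CompactSpace K := isCompact_iff_compactSpace.mp hK
  have : MetrizableSpace K := WeakSpace.metrizableSpace_of_isCompact hK
  refine IsSeqCompact.isCompact fun x hx => ?_
  obtain ⟨a, ψ, hψ, hlim⟩ := CompactSpace.tendsto_subseq fun n => (⟨x n, hx n⟩ : K)
  refine ⟨(toWeakSpace ℝ E).symm a, a.2, ψ, hψ, hE _ _ fun φ => ?_⟩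
  exact ((WeakSpace.continuous_dual φ).comp continuous_subtype_val).continuousAt.tendsto.comp hlim

theorem HasSchurProperty.hasCountableKNetwork_weakSpace (hE : HasSchurProperty E) :
    HasCountableKNetwork (WeakSpace ℝ E) :=
  hasCountableKNetwork_of_secondCountable.of_surjective (toWeakSpaceCLM ℝ E).continuous
    (toWeakSpace ℝ E).surjective fun _ => hE.isCompact_preimage_toWeakSpace

end Schur

-- Height `1` at `2⁻ⁿ`, vanishing outside `(0, 2 ^ (1 - n))`.
noncomputable def tent (n : ℕ) (t : ℝ) : ℝ := max 0 (1 - |2 ^ n * t - 1|)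

theorem continuous_tent (n : ℕ) : Continuous (tent n) := by
  unfold tent; fun_prop

theorem tent_zero (n : ℕ) : tent n 0 = 0 := by
  simp [tent]

theorem tendsto_tent (t : ℝ) : Tendsto (fun n => tent n t) atTop (𝓝 0) := by
  have hlarge : ∀ᶠ n in atTop, 1 ≤ |2 ^ n * t - 1| := by
    rcases le_or_gt t 0 with ht | ht
    · refine Eventually.of_forall fun n => le_abs.2 (Or.inr ?_)
      linarith [mul_nonpos_of_nonneg_of_nonpos (pow_nonneg zero_le_two n) ht]
    · filter_upwards [((tendsto_pow_atTop_atTop_of_one_lt one_lt_two).atTop_mul_const ht)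
        |>.eventually_ge_atTop 2] with n hn
      exact le_abs.2 (Or.inl (by linarith))
  refine tendsto_const_nhds.congr' (hlarge.mono fun n hn => ?_)
  simp [tent, hn]

theorem exists_half_lt_tent {t : ℝ} (h0 : 0 < t) (h1 : t ≤ 1) : ∃ n, 1 / 2 < tent n t := by
  obtain ⟨n, hle, hlt⟩ := exists_nat_pow_near ((one_le_inv₀ h0).2 h1) one_lt_two
  have hle' : 2 ^ n * t ≤ 1 := by
    simpa [inv_mul_cancel₀ h0.ne'] using mul_le_mul_of_nonneg_right hle h0.le
  have hlt' : 1 < 2 * (2 ^ n * t) := by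
    simpa [inv_mul_cancel₀ h0.ne', pow_succ, mul_comm, mul_left_comm] using
      mul_lt_mul_of_pos_right hlt h0
  refine ⟨n, lt_max_of_lt_right ?_⟩
  rw [abs_of_nonpos (by linarith)]
  linarith

namespace Cp

variable {X : Type*} [TopologicalSpace X]

theorem continuous_eval_s18 (x : X) : Continuous fun g : Cp X => g.1 x :=
  (continuous_apply x).comp continuous_subtype_val

theorem exists_countable_separating [T35Space X] (h : HasCountableKNetwork (Cp X)) :
    ∃ T : Set (Cp X), T.Countable ∧ ∀ x y, x ≠ y → ∃ g ∈ T, g.1 x ≠ g.1 y := by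
  obtain ⟨P, hPc, hP⟩ := h
  have : ∀ p : P, ∃ g : Cp X, p.1.Nonempty → g ∈ p.1 := fun p => by
    by_cases hp : p.1.Nonempty
    exacts [⟨hp.some, fun _ => hp.some_mem⟩, ⟨⟨0, continuous_zero⟩, fun h => (hp h).elim⟩]
  choose sel hsel using this
  have := hPc.to_subtype
  refine ⟨range sel, countable_range sel, fun x y hxy => ?_⟩
  obtain ⟨f, hf, hfxy⟩ := separatesPoints_continuous_of_t35Space hxy
  obtain ⟨p, hp, hfp, hpU⟩ := hP {⟨f, hf⟩} {g : Cp X | g.1 x ≠ g.1 y} isCompact_singleton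
    (isOpen_ne_fun (continuous_eval_s18 x) (continuous_eval_s18 y)) (singleton_subset_iff.2 hfxy)
  exact ⟨sel ⟨p, hp⟩, mem_range_self _, hpU (hsel ⟨p, hp⟩ ⟨_, hfp rfl⟩)⟩

theorem countable_of_continuous_injective {Y : Type*} [MetricSpace Y] {Φ : X → Y}
    (hΦ : Continuous Φ) (hinj : Injective Φ) (h : HasCountableKNetwork (Cp X)) : Countable X := by
  obtain ⟨P, hPc, hP⟩ := h
  let G (x : X) (n : ℕ) : Cp X :=
    ⟨fun y => tent n (min 1 (dist (Φ x) (Φ y))), (continuous_tent n).comp (by fun_prop)⟩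
  have hG : ∀ x, Tendsto (G x) atTop (𝓝 ⟨0, continuous_zero⟩) := fun x =>
    tendsto_subtype_rng.2 (tendsto_pi_nhds.2 fun y => tendsto_tent _)
  have hK : ∀ x, insert ⟨0, continuous_zero⟩ (range (G x)) ⊆ {g : Cp X | g.1 x < 1 / 2} := by
    rintro x _ (rfl | ⟨n, rfl⟩)
    · show (0 : ℝ) < 1 / 2
      norm_num
    · show tent n (min 1 (dist (Φ x) (Φ x))) < 1 / 2
      norm_num [tent_zero]
  choose p hpP hKp hpU using fun x => hP _ _ (hG x).isCompact_insert_range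
    (isOpen_lt (continuous_eval_s18 x) continuous_const) (hK x)
  have hpinj : Injective p := by
    intro x y hxy
    by_contra hne
    obtain ⟨n, hn⟩ := exists_half_lt_tent (t := min 1 (dist (Φ x) (Φ y)))
      (lt_min one_pos (dist_pos.2 (hinj.ne hne))) (min_le_left _ _)
    have hGxy : G x n ∈ p y := hxy ▸ hKp x (mem_insert_of_mem _ (mem_range_self n))
    exact (hpU y hGxy).not_gt hn
  have := hPc.to_subtype
  exact ((injective_codRestrict hpP).2 hpinj).countable

theorem countable_of_hasCountableKNetwork [T35Space X] (h : HasCountableKNetwork (Cp X)) :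
    Countable X := by
  obtain ⟨T, hTc, hT⟩ := exists_countable_separating h
  have := hTc.to_subtype
  let := metrizableSpaceMetric (T → ℝ)
  refine countable_of_continuous_injective (Φ := fun x (g : T) => g.1.1 x)
    (continuous_pi fun g => g.1.2) (fun x y hxy => ?_) h
  by_contra hne
  obtain ⟨g, hg, hgxy⟩ := hT x y hne
  exact hgxy (congrFun hxy ⟨g, hg⟩)

end Cp

theorem stmt18_general (E : Type*) [NormedAddCommGroup E] [NormedSpace ℝ E]
    [TopologicalSpace.SeparableSpace E]
    (hschur : ∀ (x : ℕ → E) (y : E),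
      (∀ φ : E →L[ℝ] ℝ, Tendsto (fun n => φ (x n)) atTop (𝓝 (φ y))) →
      Tendsto x atTop (𝓝 y)) :
    ∀ (X : Type*) [TopologicalSpace X] [T35Space X], ¬ Countable X →
      IsEmpty (Cp X ≃ₜ WeakSpace ℝ E) := by
  intro X _ _ hX
  refine ⟨fun h => hX (Cp.countable_of_hasCountableKNetwork ?_)⟩
  exact (HasSchurProperty.hasCountableKNetwork_weakSpace hschur).of_surjective h.symm.continuous
    h.symm.surjective fun _ => h.symm.isCompact_preimage.2

theorem stmt18 (E : Type*) [NormedAddCommGroup E] [NormedSpace ℝ E] [CompleteSpace E]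
    [TopologicalSpace.SeparableSpace E]
    (hschur : ∀ (x : ℕ → E) (y : E),
      (∀ φ : E →L[ℝ] ℝ, Tendsto (fun n => φ (x n)) atTop (𝓝 (φ y))) →
      Tendsto x atTop (𝓝 y)) :
    ∀ (X : Type*) [TopologicalSpace X] [T35Space X], ¬ Countable X →
      IsEmpty (Cp X ≃ₜ WeakSpace ℝ E) :=
  stmt18_general E hschur
end
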